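/- arXiv:2511.06180 — 11 statements merged into one kernel-verified Lean document; each statement's English description precedes it below -/
import Mathlib

section
/- Let G be an invertible symmetric real n×n matrix, N a real n×q matrix with NᵀG⁻¹N invertible, and n⁺ ∈ ℝⁿ a vector such that the augmented matrix N₊ = [N n⁺] (adjoining n⁺ as last column) has N₊ᵀG⁻¹N₊ invertible. Let H = G⁻¹(I − N N*) and H₊ = G⁻¹(I − N₊ N₊*), where P* denotes (PᵀG⁻¹P)⁻¹PᵀG⁻¹. Then H₊ G H = H₊. -/
/-!
With `A = (N₊ᵀG⁻¹N₊)⁻¹N₊ᵀG⁻¹` we have `A N₊ = 1`, so `(1 - N₊A)` annihilates `N₊` and hence every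
matrix `N₊E` whose columns lie in the column space of `N₊`, in particular `N = N₊ [1; 0]`.
Therefore `H₊ G H = G⁻¹ (1 - N₊A)(1 - N N*) = G⁻¹ (1 - N₊A) = H₊`.
-/

open Matrix

section WeightedProjection

variable {R m k l : Type*} [CommRing R] [Fintype m] [Fintype k] [DecidableEq k]
  {W : Matrix m m R} {P : Matrix m k R}

theorem Matrix.weightedLeftInv_mul_self (hP : IsUnit (Pᵀ * W * P).det) :
    (Pᵀ * W * P)⁻¹ * Pᵀ * W * P = 1 := by
  simpa only [Matrix.mul_assoc] using nonsing_inv_mul _ hP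

theorem Matrix.one_sub_weightedProj_mul_self [DecidableEq m] (hP : IsUnit (Pᵀ * W * P).det) :
    (1 - P * ((Pᵀ * W * P)⁻¹ * Pᵀ * W)) * P = 0 := by
  rw [Matrix.sub_mul, Matrix.one_mul, Matrix.mul_assoc, weightedLeftInv_mul_self hP,
    Matrix.mul_one, sub_self]

theorem Matrix.one_sub_weightedProj_mul_one_sub_mul [DecidableEq m] [Fintype l]
    (hP : IsUnit (Pᵀ * W * P).det)
    {E : Matrix k l R} {N : Matrix m l R} (hN : P * E = N) (X : Matrix l m R) :
    (1 - P * ((Pᵀ * W * P)⁻¹ * Pᵀ * W)) * (1 - N * X) =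
      1 - P * ((Pᵀ * W * P)⁻¹ * Pᵀ * W) := by
  rw [← hN, Matrix.mul_sub, Matrix.mul_one, ← Matrix.mul_assoc _ (P * E), ← Matrix.mul_assoc _ P,
    one_sub_weightedProj_mul_self hP, Matrix.zero_mul, Matrix.zero_mul, sub_zero]

end WeightedProjection

theorem Matrix.fromCols_mul_fromRows_one_zero {R m k l : Type*} [Semiring R] [Fintype k]
    [DecidableEq k] [Fintype l] (A : Matrix m k R) (B : Matrix m l R) :
    fromCols A B * fromRows (1 : Matrix k k R) (0 : Matrix l k R) = A := by
  rw [fromCols_mul_fromRows, Matrix.mul_one, Matrix.mul_zero, add_zero]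

theorem stmt_1_general {n q : ℕ} (G : Matrix (Fin n) (Fin n) ℝ)
    (hG : IsUnit G.det)
    (N : Matrix (Fin n) (Fin q) ℝ) (nplus : Fin n → ℝ)
    (Nplus : Matrix (Fin n) (Fin q ⊕ Unit) ℝ)
    (hNplus : Nplus = Matrix.fromCols N (Matrix.replicateCol Unit nplus))
    (hNp : IsUnit (Nplusᵀ * G⁻¹ * Nplus).det)
    (H Hplus : Matrix (Fin n) (Fin n) ℝ)
    (hH : H = G⁻¹ * (1 - N * ((Nᵀ * G⁻¹ * N)⁻¹ * Nᵀ * G⁻¹)))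
    (hHplus : Hplus = G⁻¹ * (1 - Nplus * ((Nplusᵀ * G⁻¹ * Nplus)⁻¹ * Nplusᵀ * G⁻¹))) :
    Hplus * G * H = Hplus := by
  have hN_eq :
      Nplus * fromRows (1 : Matrix (Fin q) (Fin q) ℝ) (0 : Matrix Unit (Fin q) ℝ) = N := by
    rw [hNplus, fromCols_mul_fromRows_one_zero]
  rw [hH, hHplus]
  calc G⁻¹ * (1 - Nplus * ((Nplusᵀ * G⁻¹ * Nplus)⁻¹ * Nplusᵀ * G⁻¹)) * G *
        (G⁻¹ * (1 - N * ((Nᵀ * G⁻¹ * N)⁻¹ * Nᵀ * G⁻¹)))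
      = G⁻¹ * ((1 - Nplus * ((Nplusᵀ * G⁻¹ * Nplus)⁻¹ * Nplusᵀ * G⁻¹)) * (G * G⁻¹) *
          (1 - N * ((Nᵀ * G⁻¹ * N)⁻¹ * Nᵀ * G⁻¹))) := by
        simp only [Matrix.mul_assoc]
    _ = G⁻¹ * (1 - Nplus * ((Nplusᵀ * G⁻¹ * Nplus)⁻¹ * Nplusᵀ * G⁻¹)) := by
        rw [mul_nonsing_inv _ hG, Matrix.mul_one,
          one_sub_weightedProj_mul_one_sub_mul hNp hN_eq]

/-- `H₊ G H = H₊` where `H` and `H₊` are the projection-type matrices associated with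
the active-set matrix `N` and the augmented matrix `N₊ = [N n⁺]`. -/
theorem stmt_1 {n q : ℕ} (G : Matrix (Fin n) (Fin n) ℝ)
    (hGsym : G.IsSymm) (hG : IsUnit G.det)
    (N : Matrix (Fin n) (Fin q) ℝ) (nplus : Fin n → ℝ)
    (Nplus : Matrix (Fin n) (Fin q ⊕ Unit) ℝ)
    (hNplus : Nplus = Matrix.fromCols N (Matrix.replicateCol Unit nplus))
    (hN : IsUnit (Nᵀ * G⁻¹ * N).det)
    (hNp : IsUnit (Nplusᵀ * G⁻¹ * Nplus).det)
    (H Hplus : Matrix (Fin n) (Fin n) ℝ)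
    (hH : H = G⁻¹ * (1 - N * ((Nᵀ * G⁻¹ * N)⁻¹ * Nᵀ * G⁻¹)))
    (hHplus : Hplus = G⁻¹ * (1 - Nplus * ((Nplusᵀ * G⁻¹ * Nplus)⁻¹ * Nplusᵀ * G⁻¹))) :
    Hplus * G * H = Hplus :=
  stmt_1_general G hG N nplus Nplus hNplus hNp H Hplus hH hHplus
end

section
/- Consider the quadratic minimax problem min over x ∈ ℝ^{n_x} max over y ∈ ℝ^{n_y} of f(x,y) = ½ zᵀGz + cᵀz subject to Dz + h = 0, where z = (x,y), G = [[G₁₁, G₁₂],[G₁₂ᵀ, G₂₂]] is invertible with G₁₁ symmetric, G₂₂ symmetric negative definite, D = [A B] with A ∈ ℝ^{q×n_x}, B ∈ ℝ^{q×n_y} of full row rank, and assume Γ := G₁₁ − [G₁₂ Aᵀ]·[[G₂₂, Bᵀ],[B, 0]]⁻¹·[G₁₂ᵀ; A] is positive definite (the block matrix [[G₂₂, Bᵀ],[B, 0]] being invertible) and DG⁻¹Dᵀ is invertible. Set N = Dᵀ, H = G⁻¹ − G⁻¹N(NᵀG⁻¹N)⁻¹NᵀG⁻¹, and g(z) = Gz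 + c. If ẑ satisfies Dẑ + h = 0, then the point z̄ = ẑ − H g(ẑ), written z̄ = (x̄, ȳ), satisfies: (a) Dz̄ + h = 0; (b) f(x̄, y) ≤ f(x̄, ȳ) for every y ∈ ℝ^{n_y} with Ax̄ + By + h = 0; (c) f(x̄, ȳ) ≤ sup{ f(x, y) : y ∈ ℝ^{n_y}, Ax + By + h = 0 } for every x ∈ ℝ^{n_x}; i.e., z̄ is a minimax point of the equality-constrained problem. -/
/-!
With `D = Nᵀ`, the matrix `H` satisfies `Nᵀ H = 0` and `G H = 1 - N (Nᵀ G⁻¹ N)⁻¹ Nᵀ G⁻¹`, so the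
step `z̄ = ẑ - H g(ẑ)` stays feasible and makes `g(z̄) = N μ`: `z̄` is a KKT point. At a KKT point
`f(z̄ + d) = f(z̄) + ½ dᵀ G d` for every `d` with `D d = 0`. Moving only `y` gives
`½ wᵀ G₂₂ w ≤ 0`, hence (b). For (c), given `x`, the move `d = (x - x̄, w)` with `w` taken from
the KKT system of `[[G₂₂, Bᵀ], [B, 0]]` has `dᵀ G d = (x - x̄)ᵀ Γ (x - x̄) ≥ 0`, and the point
reached is again stationary in `y`, hence a constrained maximiser of `f(x, ·)`; so the supremum
is attained there and bounds `f(x̄, ȳ)`.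
-/

open Matrix

section ProjectedInverse

variable {R m n : Type*} [CommRing R] [Fintype m] [Fintype n] [DecidableEq m] [DecidableEq n]

noncomputable def projectedInverse (G : Matrix n n R) (N : Matrix n m R) : Matrix n n R :=
  G⁻¹ - G⁻¹ * N * (Nᵀ * G⁻¹ * N)⁻¹ * Nᵀ * G⁻¹

theorem transpose_mul_projectedInverse {G : Matrix n n R} {N : Matrix n m R}
    (hN : IsUnit (Nᵀ * G⁻¹ * N).det) : Nᵀ * projectedInverse G N = 0 := by
  rw [projectedInverse, Matrix.mul_sub]
  simp only [← Matrix.mul_assoc, mul_nonsing_inv _ hN, Matrix.one_mul, sub_self]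

theorem mul_projectedInverse {G : Matrix n n R} (hG : IsUnit G.det) (N : Matrix n m R) :
    G * projectedInverse G N = 1 - N * ((Nᵀ * G⁻¹ * N)⁻¹ * Nᵀ * G⁻¹) := by
  rw [projectedInverse, Matrix.mul_sub]
  simp only [← Matrix.mul_assoc, mul_nonsing_inv _ hG, Matrix.one_mul]

theorem exists_mulVec_projectedNewton_add_eq {G : Matrix n n R} (hG : IsUnit G.det)
    (N : Matrix n m R) (c z : n → R) :
    ∃ μ, G *ᵥ (z - projectedInverse G N *ᵥ (G *ᵥ z + c)) + c = N *ᵥ μ :=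
  ⟨((Nᵀ * G⁻¹ * N)⁻¹ * Nᵀ * G⁻¹) *ᵥ (G *ᵥ z + c), by
    rw [mulVec_sub, mulVec_mulVec, mul_projectedInverse hG, sub_mulVec, one_mulVec,
      mulVec_mulVec]
    abel⟩

end ProjectedInverse

section Quadratic

variable {n : Type*} [Fintype n]

noncomputable def quadraticObjective (G : Matrix n n ℝ) (c z : n → ℝ) : ℝ :=
  1 / 2 * (z ⬝ᵥ G *ᵥ z) + c ⬝ᵥ z

theorem quadraticObjective_add {G : Matrix n n ℝ} (hG : G.IsSymm) (c z d : n → ℝ) :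
    quadraticObjective G c (z + d) =
      quadraticObjective G c z + (G *ᵥ z + c) ⬝ᵥ d + 1 / 2 * (d ⬝ᵥ G *ᵥ d) := by
  have hzd : z ⬝ᵥ G *ᵥ d = d ⬝ᵥ G *ᵥ z := by
    rw [← dotProduct_transpose_mulVec, hG.eq]
  simp only [quadraticObjective, mulVec_add, dotProduct_add, add_dotProduct, hzd,
    dotProduct_comm _ d]
  ring

end Quadratic

section KKT

variable {m n p : Type*} [Fintype m] [Fintype n] [Fintype p]
  {G11 : Matrix m m ℝ} {G12 : Matrix m n ℝ} {G22 : Matrix n n ℝ}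
  {A : Matrix p m ℝ} {B : Matrix p n ℝ} {cx : m → ℝ} {cy : n → ℝ}

theorem fromBlocks_mulVec_sumElim {k l α : Type*} [NonUnitalNonAssocSemiring α]
    (P : Matrix k m α) (Q : Matrix k n α) (R : Matrix l m α) (S : Matrix l n α)
    (u : m → α) (w : n → α) :
    fromBlocks P Q R S *ᵥ Sum.elim u w = Sum.elim (P *ᵥ u + Q *ᵥ w) (R *ᵥ u + S *ᵥ w) := by
  rw [fromBlocks_mulVec, Sum.elim_comp_inl, Sum.elim_comp_inr]

theorem fromBlocks_mulVec_sumElim_add_eq_iff {x : m → ℝ} {y : n → ℝ} {μ : p → ℝ} :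
    fromBlocks G11 G12 G12ᵀ G22 *ᵥ Sum.elim x y + Sum.elim cx cy = (fromCols A B)ᵀ *ᵥ μ ↔
      G11 *ᵥ x + G12 *ᵥ y + cx = Aᵀ *ᵥ μ ∧ G12ᵀ *ᵥ x + G22 *ᵥ y + cy = Bᵀ *ᵥ μ := by
  rw [fromBlocks_mulVec_sumElim, transpose_fromCols, fromRows_mulVec, ← Sum.elim_add_add,
    Sum.elim_eq_iff]

theorem quadraticObjective_sumElim_le_of_stationary (hG11 : G11.IsSymm) (hG22 : G22.IsSymm)
    (hG22nd : (-G22).PosSemidef) {x : m → ℝ} {y₀ y : n → ℝ} {μ : p → ℝ}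
    (hstat : G12ᵀ *ᵥ x + G22 *ᵥ y₀ + cy = Bᵀ *ᵥ μ) (hy : B *ᵥ y = B *ᵥ y₀) :
    quadraticObjective (fromBlocks G11 G12 G12ᵀ G22) (Sum.elim cx cy) (Sum.elim x y) ≤
      quadraticObjective (fromBlocks G11 G12 G12ᵀ G22) (Sum.elim cx cy) (Sum.elim x y₀) := by
  set w := y - y₀
  have hsplit : Sum.elim x y = Sum.elim x y₀ + Sum.elim (0 : m → ℝ) w := by
    rw [← Sum.elim_add_add, add_zero, add_sub_cancel]
  have hgrad : (Bᵀ *ᵥ μ) ⬝ᵥ w = 0 := by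
    rw [dotProduct_comm, dotProduct_transpose_mulVec, mulVec_sub, hy, sub_self, dotProduct_zero]
  have hcurv : w ⬝ᵥ G22 *ᵥ w ≤ 0 := by
    simpa [neg_mulVec] using hG22nd.dotProduct_mulVec_nonneg w
  rw [hsplit, quadraticObjective_add (hG11.fromBlocks rfl hG22), fromBlocks_mulVec_sumElim,
    fromBlocks_mulVec_sumElim]
  simp only [← Sum.elim_add_add, sumElim_dotProduct_sumElim, hstat, hgrad, mulVec_zero,
    dotProduct_zero, zero_dotProduct, zero_add, add_zero]
  linarith

variable [DecidableEq n] [DecidableEq p]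

theorem exists_kkt_solution (hK : IsUnit (fromBlocks G22 Bᵀ B 0).det) (r : n → ℝ) (s : p → ℝ) :
    ∃ w ν, G22 *ᵥ w + Bᵀ *ᵥ ν = r ∧ B *ᵥ w = s := by
  set v := (fromBlocks G22 Bᵀ B 0)⁻¹ *ᵥ Sum.elim r s
  have hv : fromBlocks G22 Bᵀ B 0 *ᵥ v = Sum.elim r s := by
    rw [mulVec_mulVec, mul_nonsing_inv _ hK, one_mulVec]
  rw [← Sum.elim_comp_inl_inr v, fromBlocks_mulVec_sumElim, zero_mulVec, add_zero,
    Sum.elim_eq_iff] at hv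
  exact ⟨_, _, hv⟩

theorem dotProduct_schur_mulVec_eq (hK : IsUnit (fromBlocks G22 Bᵀ B 0).det)
    {u : m → ℝ} {w : n → ℝ} {ν : p → ℝ}
    (hw : G22 *ᵥ w + Bᵀ *ᵥ ν = -(G12ᵀ *ᵥ u)) (hν : B *ᵥ w = -(A *ᵥ u)) :
    u ⬝ᵥ (G11 - fromCols G12 Aᵀ * (fromBlocks G22 Bᵀ B 0)⁻¹ * fromRows G12ᵀ A) *ᵥ u =
      Sum.elim u w ⬝ᵥ fromBlocks G11 G12 G12ᵀ G22 *ᵥ Sum.elim u w := by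
  have hinv : (fromBlocks G22 Bᵀ B 0)⁻¹ *ᵥ (fromRows G12ᵀ A *ᵥ u) = -Sum.elim w ν := by
    have hwν : fromBlocks G22 Bᵀ B 0 *ᵥ -Sum.elim w ν = fromRows G12ᵀ A *ᵥ u := by
      rw [mulVec_neg, fromBlocks_mulVec_sumElim, fromRows_mulVec, zero_mulVec, add_zero, hw, hν,
        Sum.elim_neg_neg, neg_neg]
    rw [← hwν, mulVec_mulVec, nonsing_inv_mul _ hK, one_mulVec]
  have hcross : w ⬝ᵥ (G12ᵀ *ᵥ u + G22 *ᵥ w) = u ⬝ᵥ Aᵀ *ᵥ ν := by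
    rw [show G12ᵀ *ᵥ u + G22 *ᵥ w = -(Bᵀ *ᵥ ν) by linear_combination hw, dotProduct_neg,
      dotProduct_transpose_mulVec, hν, dotProduct_neg, neg_neg, dotProduct_transpose_mulVec]
  rw [sub_mulVec, ← mulVec_mulVec, ← mulVec_mulVec, hinv, mulVec_neg, fromCols_mulVec_sumElim,
    fromBlocks_mulVec_sumElim, sumElim_dotProduct_sumElim, hcross]
  simp only [sub_neg_eq_add, dotProduct_add, add_assoc]

theorem quadraticObjective_le_of_schur_posSemidef (hG11 : G11.IsSymm) (hG22 : G22.IsSymm)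
    (hK : IsUnit (fromBlocks G22 Bᵀ B 0).det)
    (hΓ : (G11 - fromCols G12 Aᵀ * (fromBlocks G22 Bᵀ B 0)⁻¹ * fromRows G12ᵀ A).PosSemidef)
    {z : m ⊕ n → ℝ} {μ : p → ℝ}
    (hstat : fromBlocks G11 G12 G12ᵀ G22 *ᵥ z + Sum.elim cx cy = (fromCols A B)ᵀ *ᵥ μ)
    {u : m → ℝ} {w : n → ℝ} {ν : p → ℝ}
    (hw : G22 *ᵥ w + Bᵀ *ᵥ ν = -(G12ᵀ *ᵥ u)) (hν : B *ᵥ w = -(A *ᵥ u)) :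
    quadraticObjective (fromBlocks G11 G12 G12ᵀ G22) (Sum.elim cx cy) z ≤
      quadraticObjective (fromBlocks G11 G12 G12ᵀ G22) (Sum.elim cx cy) (z + Sum.elim u w) := by
  have hgrad : (fromCols A B)ᵀ *ᵥ μ ⬝ᵥ Sum.elim u w = 0 := by
    rw [dotProduct_comm, dotProduct_transpose_mulVec, fromCols_mulVec_sumElim, hν, add_neg_cancel,
      dotProduct_zero]
  have hcurv := hΓ.dotProduct_mulVec_nonneg u
  rw [star_trivial, dotProduct_schur_mulVec_eq hK hw hν] at hcurv
  rw [quadraticObjective_add (hG11.fromBlocks rfl hG22), hstat, hgrad]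
  linarith

theorem quadraticObjective_le_sSup_of_kkt (hG11 : G11.IsSymm) (hG22 : G22.IsSymm)
    (hG22nd : (-G22).PosSemidef) (hK : IsUnit (fromBlocks G22 Bᵀ B 0).det)
    (hΓ : (G11 - fromCols G12 Aᵀ * (fromBlocks G22 Bᵀ B 0)⁻¹ * fromRows G12ᵀ A).PosSemidef)
    {xbar : m → ℝ} {ybar : n → ℝ} {μ : p → ℝ} {h : p → ℝ}
    (hstat : fromBlocks G11 G12 G12ᵀ G22 *ᵥ Sum.elim xbar ybar + Sum.elim cx cy =
      (fromCols A B)ᵀ *ᵥ μ)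
    (hfeas : A *ᵥ xbar + B *ᵥ ybar + h = 0) (x : m → ℝ) :
    quadraticObjective (fromBlocks G11 G12 G12ᵀ G22) (Sum.elim cx cy) (Sum.elim xbar ybar) ≤
      sSup {v | ∃ y, A *ᵥ x + B *ᵥ y + h = 0 ∧
        v = quadraticObjective (fromBlocks G11 G12 G12ᵀ G22) (Sum.elim cx cy) (Sum.elim x y)} := by
  obtain ⟨w, ν, hw, hν⟩ := exists_kkt_solution hK (-(G12ᵀ *ᵥ (x - xbar))) (-(A *ᵥ (x - xbar)))
  have hstat_y := (fromBlocks_mulVec_sumElim_add_eq_iff.mp hstat).2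
  have hstat_x : G12ᵀ *ᵥ x + G22 *ᵥ (ybar + w) + cy = Bᵀ *ᵥ (μ - ν) := by
    rw [mulVec_sub] at hw
    rw [mulVec_add, mulVec_sub]
    linear_combination hstat_y + hw
  have hfeas_x : A *ᵥ x + B *ᵥ (ybar + w) + h = 0 := by
    rw [mulVec_sub] at hν
    rw [mulVec_add]
    linear_combination hfeas + hν
  have hshift : Sum.elim xbar ybar + Sum.elim (x - xbar) w = Sum.elim x (ybar + w) := by
    rw [← Sum.elim_add_add, add_sub_cancel]
  have hlower := quadraticObjective_le_of_schur_posSemidef hG11 hG22 hK hΓ hstat hw hν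
  rw [hshift] at hlower
  have hmax : ∀ y, A *ᵥ x + B *ᵥ y + h = 0 →
      quadraticObjective (fromBlocks G11 G12 G12ᵀ G22) (Sum.elim cx cy) (Sum.elim x y) ≤
        quadraticObjective (fromBlocks G11 G12 G12ᵀ G22) (Sum.elim cx cy) (Sum.elim x (ybar + w)) :=
    fun y hy => quadraticObjective_sumElim_le_of_stationary hG11 hG22 hG22nd hstat_x
      (by linear_combination hy - hfeas_x)
  exact hlower.trans
    (le_csSup ⟨_, fun _ ⟨y, hy, hv⟩ => hv ▸ hmax y hy⟩ ⟨ybar + w, hfeas_x, rfl⟩)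

end KKT

theorem stmt_2_general {nx ny q : ℕ}
    (G11 : Matrix (Fin nx) (Fin nx) ℝ) (G12 : Matrix (Fin nx) (Fin ny) ℝ)
    (G22 : Matrix (Fin ny) (Fin ny) ℝ)
    (hG11 : G11.IsSymm) (hG22 : G22.IsSymm) (hG22nd : (-G22).PosDef)
    (A : Matrix (Fin q) (Fin nx) ℝ) (B : Matrix (Fin q) (Fin ny) ℝ)
    (cx : Fin nx → ℝ) (cy : Fin ny → ℝ) (h : Fin q → ℝ)
    -- assembled data
    (G : Matrix (Fin nx ⊕ Fin ny) (Fin nx ⊕ Fin ny) ℝ)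
    (hG : G = Matrix.fromBlocks G11 G12 G12ᵀ G22)
    (hGinv : IsUnit G.det)
    (c : Fin nx ⊕ Fin ny → ℝ) (hc : c = Sum.elim cx cy)
    (D : Matrix (Fin q) (Fin nx ⊕ Fin ny) ℝ) (hD : D = Matrix.fromCols A B)
    (hDGD : IsUnit (D * G⁻¹ * Dᵀ).det)
    -- the KKT block matrix and the Schur-type matrix Γ
    (Kb : Matrix (Fin ny ⊕ Fin q) (Fin ny ⊕ Fin q) ℝ)
    (hKb : Kb = Matrix.fromBlocks G22 Bᵀ B 0)
    (hKbInv : IsUnit Kb.det)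
    (Γ : Matrix (Fin nx) (Fin nx) ℝ)
    (hΓ : Γ = G11 - Matrix.fromCols G12 Aᵀ * Kb⁻¹ * Matrix.fromRows G12ᵀ A)
    (hΓpd : Γ.PosDef)
    -- the objective
    (f : (Fin nx → ℝ) → (Fin ny → ℝ) → ℝ)
    (hf : ∀ x y, f x y = (1 / 2) * (Sum.elim x y ⬝ᵥ G *ᵥ Sum.elim x y) + c ⬝ᵥ Sum.elim x y)
    -- N, H, g
    (N : Matrix (Fin nx ⊕ Fin ny) (Fin q) ℝ) (hN : N = Dᵀ)
    (H : Matrix (Fin nx ⊕ Fin ny) (Fin nx ⊕ Fin ny) ℝ)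
    (hH : H = G⁻¹ - G⁻¹ * N * (Nᵀ * G⁻¹ * N)⁻¹ * Nᵀ * G⁻¹)
    (g : (Fin nx ⊕ Fin ny → ℝ) → Fin nx ⊕ Fin ny → ℝ)
    (hg : ∀ z, g z = G *ᵥ z + c)
    -- the feasible starting point and the candidate minimax point
    (zhat : Fin nx ⊕ Fin ny → ℝ) (hzhat : D *ᵥ zhat + h = 0)
    (zbar : Fin nx ⊕ Fin ny → ℝ) (hzbar : zbar = zhat - H *ᵥ g zhat)
    (xbar : Fin nx → ℝ) (hxbar : xbar = fun i => zbar (Sum.inl i))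
    (ybar : Fin ny → ℝ) (hybar : ybar = fun j => zbar (Sum.inr j)) :
    D *ᵥ zbar + h = 0 ∧
    (∀ y : Fin ny → ℝ, A *ᵥ xbar + B *ᵥ y + h = 0 → f xbar y ≤ f xbar ybar) ∧
    (∀ x : Fin nx → ℝ,
      f xbar ybar ≤ sSup {v : ℝ | ∃ y : Fin ny → ℝ, A *ᵥ x + B *ᵥ y + h = 0 ∧ v = f x y}) := by
  obtain rfl : f = fun x y => quadraticObjective G c (Sum.elim x y) := funext₂ hf
  obtain rfl : g = fun z => G *ᵥ z + c := funext hg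
  change H = projectedInverse G N at hH
  subst hN hH hzbar
  have hsplit : zhat - projectedInverse G Dᵀ *ᵥ (G *ᵥ zhat + c) = Sum.elim xbar ybar := by
    rw [hxbar, hybar]
    exact (Sum.elim_comp_inl_inr _).symm
  have hstep : D * projectedInverse G Dᵀ = 0 := by
    simpa using transpose_mul_projectedInverse (N := Dᵀ) (by simpa using hDGD)
  have hfeas : D *ᵥ Sum.elim xbar ybar + h = 0 := by
    rwa [← hsplit, mulVec_sub, mulVec_mulVec, hstep, zero_mulVec, sub_zero]
  obtain ⟨μ, hμ⟩ := exists_mulVec_projectedNewton_add_eq hGinv Dᵀ c zhat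
  rw [hsplit] at hμ ⊢
  subst hG hc hD hKb hΓ
  rw [fromCols_mulVec_sumElim] at hfeas
  refine ⟨by rwa [fromCols_mulVec_sumElim], fun y hy => ?_,
    quadraticObjective_le_sSup_of_kkt hG11 hG22 hG22nd.posSemidef hKbInv hΓpd.posSemidef hμ hfeas⟩
  exact quadraticObjective_sumElim_le_of_stationary hG11 hG22 hG22nd.posSemidef
    (fromBlocks_mulVec_sumElim_add_eq_iff.mp hμ).2 (by linear_combination hy - hfeas)

/-- Lemma: for the equality-constrained quadratic minimax problem, starting from any
feasible point `ẑ`, the point `z̄ = ẑ − H g(ẑ)` is a minimax point. -/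
theorem stmt_2 {nx ny q : ℕ}
    (G11 : Matrix (Fin nx) (Fin nx) ℝ) (G12 : Matrix (Fin nx) (Fin ny) ℝ)
    (G22 : Matrix (Fin ny) (Fin ny) ℝ)
    (hG11 : G11.IsSymm) (hG22 : G22.IsSymm) (hG22nd : (-G22).PosDef)
    (A : Matrix (Fin q) (Fin nx) ℝ) (B : Matrix (Fin q) (Fin ny) ℝ)
    (hB : LinearIndependent ℝ (fun i : Fin q => B i))
    (cx : Fin nx → ℝ) (cy : Fin ny → ℝ) (h : Fin q → ℝ)
    -- assembled data
    (G : Matrix (Fin nx ⊕ Fin ny) (Fin nx ⊕ Fin ny) ℝ)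
    (hG : G = Matrix.fromBlocks G11 G12 G12ᵀ G22)
    (hGinv : IsUnit G.det)
    (c : Fin nx ⊕ Fin ny → ℝ) (hc : c = Sum.elim cx cy)
    (D : Matrix (Fin q) (Fin nx ⊕ Fin ny) ℝ) (hD : D = Matrix.fromCols A B)
    (hDGD : IsUnit (D * G⁻¹ * Dᵀ).det)
    -- the KKT block matrix and the Schur-type matrix Γ
    (Kb : Matrix (Fin ny ⊕ Fin q) (Fin ny ⊕ Fin q) ℝ)
    (hKb : Kb = Matrix.fromBlocks G22 Bᵀ B 0)
    (hKbInv : IsUnit Kb.det)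
    (Γ : Matrix (Fin nx) (Fin nx) ℝ)
    (hΓ : Γ = G11 - Matrix.fromCols G12 Aᵀ * Kb⁻¹ * Matrix.fromRows G12ᵀ A)
    (hΓpd : Γ.PosDef)
    -- the objective
    (f : (Fin nx → ℝ) → (Fin ny → ℝ) → ℝ)
    (hf : ∀ x y, f x y = (1 / 2) * (Sum.elim x y ⬝ᵥ G *ᵥ Sum.elim x y) + c ⬝ᵥ Sum.elim x y)
    -- N, H, g
    (N : Matrix (Fin nx ⊕ Fin ny) (Fin q) ℝ) (hN : N = Dᵀ)
    (H : Matrix (Fin nx ⊕ Fin ny) (Fin nx ⊕ Fin ny) ℝ)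
    (hH : H = G⁻¹ - G⁻¹ * N * (Nᵀ * G⁻¹ * N)⁻¹ * Nᵀ * G⁻¹)
    (g : (Fin nx ⊕ Fin ny → ℝ) → Fin nx ⊕ Fin ny → ℝ)
    (hg : ∀ z, g z = G *ᵥ z + c)
    -- the feasible starting point and the candidate minimax point
    (zhat : Fin nx ⊕ Fin ny → ℝ) (hzhat : D *ᵥ zhat + h = 0)
    (zbar : Fin nx ⊕ Fin ny → ℝ) (hzbar : zbar = zhat - H *ᵥ g zhat)
    (xbar : Fin nx → ℝ) (hxbar : xbar = fun i => zbar (Sum.inl i))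
    (ybar : Fin ny → ℝ) (hybar : ybar = fun j => zbar (Sum.inr j)) :
    D *ᵥ zbar + h = 0 ∧
    (∀ y : Fin ny → ℝ, A *ᵥ xbar + B *ᵥ y + h = 0 → f xbar y ≤ f xbar ybar) ∧
    (∀ x : Fin nx → ℝ,
      f xbar ybar ≤ sSup {v : ℝ | ∃ y : Fin ny → ℝ, A *ᵥ x + B *ᵥ y + h = 0 ∧ v = f x y}) :=
  stmt_2_general G11 G12 G22 hG11 hG22 hG22nd A B cx cy h G hG hGinv c hc D hD hDGD Kb hKb hKbInv Γ
    hΓ hΓpd f hf N hN H hH g hg zhat hzhat zbar hzbar xbar hxbar ybar hybar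
end

section
/- Let G be an invertible symmetric real n×n matrix, N a real n×q matrix, n⁺ ∈ ℝⁿ, and N₊ = [N n⁺], with both NᵀG⁻¹N and N₊ᵀG⁻¹N₊ invertible. Let H = G⁻¹(I − N N*), H₊ = G⁻¹(I − N₊ N₊*) with P* = (PᵀG⁻¹P)⁻¹PᵀG⁻¹, let c ∈ ℝⁿ, g(w) = Gw + c, and fix z ∈ ℝⁿ with H₊ g(z) = 0. For any t ∈ ℝ set d = H n⁺ and z̄ = z + t d. Then: (a) H₊ g(z̄) = 0; (b) Nᵀ z̄ = Nᵀ z (every active linear functional n_iᵀz with n_i a column of N is unchanged); (c) n⁺ᵀ z̄ = n⁺ᵀ z + t · n⁺ᵀ H n⁺. -/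
/-!
Write `P* = (PᵀG⁻¹P)⁻¹PᵀG⁻¹`, so that `P P*` is a projection fixing the columns of `P`.
Hence `H_P P = 0` and `Pᵀ H_P = 0`, while `G H_P = I − P P*`. Since `N` consists of columns of
`N₊`, we get `H₊ N = 0` and `H₊ n⁺ = 0`, so `H₊ G d = H₊ (I − N N*) n⁺ = H₊ n⁺ = 0`: the gradient
changes along `d` by `G d`, which `H₊` kills, and `Nᵀ d = Nᵀ H n⁺ = 0`.
-/

open Matrix

namespace Matrix

variable {m k R : Type*} [Fintype m] [DecidableEq m] [Fintype k] [DecidableEq k] [CommRing R]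

noncomputable def reducedInverse (G : Matrix m m R) (P : Matrix m k R) : Matrix m m R :=
  G⁻¹ * (1 - P * ((Pᵀ * G⁻¹ * P)⁻¹ * Pᵀ * G⁻¹))

variable {G : Matrix m m R} {P : Matrix m k R}

theorem reducedInverse_mul_self (hP : IsUnit (Pᵀ * G⁻¹ * P).det) :
    reducedInverse G P * P = 0 := by
  have hfix : P * ((Pᵀ * G⁻¹ * P)⁻¹ * Pᵀ * G⁻¹) * P = P := by
    calc P * ((Pᵀ * G⁻¹ * P)⁻¹ * Pᵀ * G⁻¹) * P
        = P * ((Pᵀ * G⁻¹ * P)⁻¹ * (Pᵀ * G⁻¹ * P)) := by simp only [Matrix.mul_assoc]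
      _ = P := by rw [nonsing_inv_mul _ hP, Matrix.mul_one]
  rw [reducedInverse, Matrix.mul_assoc, Matrix.sub_mul, Matrix.one_mul, hfix, sub_self,
    Matrix.mul_zero]

theorem transpose_mul_reducedInverse (hP : IsUnit (Pᵀ * G⁻¹ * P).det) :
    Pᵀ * reducedInverse G P = 0 := by
  have hfix : Pᵀ * G⁻¹ * (P * ((Pᵀ * G⁻¹ * P)⁻¹ * Pᵀ * G⁻¹)) = Pᵀ * G⁻¹ := by
    rw [← Matrix.mul_assoc, Matrix.mul_assoc (Pᵀ * G⁻¹ * P)⁻¹,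
      mul_nonsing_inv_cancel_left _ _ hP]
  rw [reducedInverse, ← Matrix.mul_assoc, Matrix.mul_sub, Matrix.mul_one, hfix, sub_self]

theorem mul_mul_reducedInverse_of_mul_eq_zero (hG : IsUnit G.det) {K : Matrix m m R}
    (hKP : K * P = 0) : K * G * reducedInverse G P = K := by
  rw [reducedInverse, Matrix.mul_assoc K, mul_nonsing_inv_cancel_left _ _ hG, Matrix.mul_sub,
    Matrix.mul_one, ← Matrix.mul_assoc, hKP, Matrix.zero_mul, sub_zero]

end Matrix

theorem Matrix.mul_fromCols_replicateCol_eq_zero {m n q R : Type*} [Fintype n]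
    [Semiring R] {A : Matrix m n R} {B : Matrix n q R} {v : n → R}
    (h : A * fromCols B (replicateCol Unit v) = 0) : A * B = 0 ∧ A *ᵥ v = 0 := by
  rw [mul_fromCols, ← fromCols_zero, fromCols_ext_iff, ← replicateCol_mulVec,
    replicateCol_eq_zero] at h
  exact h

theorem stmt_3_general {n q : ℕ} (G : Matrix (Fin n) (Fin n) ℝ)
    (hG : IsUnit G.det)
    (N : Matrix (Fin n) (Fin q) ℝ) (nplus : Fin n → ℝ)
    (Nplus : Matrix (Fin n) (Fin q ⊕ Unit) ℝ)
    (hNplus : Nplus = Matrix.fromCols N (Matrix.replicateCol Unit nplus))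
    (hN : IsUnit (Nᵀ * G⁻¹ * N).det)
    (hNp : IsUnit (Nplusᵀ * G⁻¹ * Nplus).det)
    (H Hplus : Matrix (Fin n) (Fin n) ℝ)
    (hH : H = G⁻¹ * (1 - N * ((Nᵀ * G⁻¹ * N)⁻¹ * Nᵀ * G⁻¹)))
    (hHplus : Hplus = G⁻¹ * (1 - Nplus * ((Nplusᵀ * G⁻¹ * Nplus)⁻¹ * Nplusᵀ * G⁻¹)))
    (c : Fin n → ℝ) (g : (Fin n → ℝ) → Fin n → ℝ) (hg : ∀ w, g w = G *ᵥ w + c)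
    (z : Fin n → ℝ) (hz : Hplus *ᵥ g z = 0)
    (t : ℝ) (d : Fin n → ℝ) (hd : d = H *ᵥ nplus)
    (zbar : Fin n → ℝ) (hzbar : zbar = z + t • d) :
    Hplus *ᵥ g zbar = 0 ∧
    Nᵀ *ᵥ zbar = Nᵀ *ᵥ z ∧
    nplus ⬝ᵥ zbar = nplus ⬝ᵥ z + t * (nplus ⬝ᵥ H *ᵥ nplus) := by
  change H = reducedInverse G N at hH
  change Hplus = reducedInverse G Nplus at hHplus
  have hHplusNplus := hHplus ▸ reducedInverse_mul_self hNp
  rw [hNplus] at hHplusNplus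
  obtain ⟨hHplusN, hHplusnplus⟩ := mul_fromCols_replicateCol_eq_zero hHplusNplus
  have hGd : Hplus *ᵥ (G *ᵥ d) = 0 := by
    rw [hd, mulVec_mulVec, mulVec_mulVec, hH,
      mul_mul_reducedInverse_of_mul_eq_zero hG hHplusN, hHplusnplus]
  have hNd : Nᵀ *ᵥ d = 0 := by
    rw [hd, mulVec_mulVec, hH, transpose_mul_reducedInverse hN, zero_mulVec]
  refine ⟨?_, ?_, ?_⟩
  · have hgzbar : g zbar = g z + t • (G *ᵥ d) := by
      rw [hg, hg, hzbar, mulVec_add, mulVec_smul, add_right_comm]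
    rw [hgzbar, mulVec_add, mulVec_smul, hz, hGd, smul_zero, add_zero]
  · rw [hzbar, mulVec_add, mulVec_smul, hNd, smul_zero, add_zero]
  · rw [hzbar, dotProduct_add, dotProduct_smul, hd, smul_eq_mul]

/-- Moving along `d = H n⁺` from a point `z` with `H₊ g(z) = 0` preserves the
stationarity condition and the active linear functionals, while the new constraint
value changes at rate `n⁺ᵀ H n⁺`. -/
theorem stmt_3 {n q : ℕ} (G : Matrix (Fin n) (Fin n) ℝ)
    (hGsym : G.IsSymm) (hG : IsUnit G.det)
    (N : Matrix (Fin n) (Fin q) ℝ) (nplus : Fin n → ℝ)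
    (Nplus : Matrix (Fin n) (Fin q ⊕ Unit) ℝ)
    (hNplus : Nplus = Matrix.fromCols N (Matrix.replicateCol Unit nplus))
    (hN : IsUnit (Nᵀ * G⁻¹ * N).det)
    (hNp : IsUnit (Nplusᵀ * G⁻¹ * Nplus).det)
    (H Hplus : Matrix (Fin n) (Fin n) ℝ)
    (hH : H = G⁻¹ * (1 - N * ((Nᵀ * G⁻¹ * N)⁻¹ * Nᵀ * G⁻¹)))
    (hHplus : Hplus = G⁻¹ * (1 - Nplus * ((Nplusᵀ * G⁻¹ * Nplus)⁻¹ * Nplusᵀ * G⁻¹)))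
    (c : Fin n → ℝ) (g : (Fin n → ℝ) → Fin n → ℝ) (hg : ∀ w, g w = G *ᵥ w + c)
    (z : Fin n → ℝ) (hz : Hplus *ᵥ g z = 0)
    (t : ℝ) (d : Fin n → ℝ) (hd : d = H *ᵥ nplus)
    (zbar : Fin n → ℝ) (hzbar : zbar = z + t • d) :
    Hplus *ᵥ g zbar = 0 ∧
    Nᵀ *ᵥ zbar = Nᵀ *ᵥ z ∧
    nplus ⬝ᵥ zbar = nplus ⬝ᵥ z + t * (nplus ⬝ᵥ H *ᵥ nplus) :=
  stmt_3_general G hG N nplus Nplus hNplus hN hNp H Hplus hH hHplus c g hg z hz t d hd zbar hzbar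
end

section
/- Let G be an invertible symmetric real n×n matrix, N a real n×q matrix, n⁺ ∈ ℝⁿ, and N₊ = [N n⁺], with both NᵀG⁻¹N and N₊ᵀG⁻¹N₊ invertible. Let H = G⁻¹(I − N N*), H₊ = G⁻¹(I − N₊ N₊*) with P* = (PᵀG⁻¹P)⁻¹PᵀG⁻¹, let c ∈ ℝⁿ, f(w) = ½wᵀGw + cᵀw, g(w) = Gw + c, d = H n⁺, and suppose z ∈ ℝⁿ satisfies H₊ g(z) = 0. Let u_p(z) denote the last component of −N₊* g(z). Then for every t ∈ ℝ, with z̄ = z + t d: f(z̄) = f(z) + t · (dᵀn⁺) · (t/2 − u_p(z)). -/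
/-!
Write `N* = (NᵀG⁻¹N)⁻¹NᵀG⁻¹` and `H = G⁻¹(I − N N*)`. Since `Nᵀ H = 0` and `G H = I − N N*`,
the step `d = H n⁺` satisfies `Nᵀd = 0` and `dᵀGd = dᵀn⁺`. Stationarity `H₊ g(z) = 0` says
`g(z) = N₊ (N₊* g(z))`, so by `Nᵀd = 0` only the last column `n⁺` of `N₊` pairs with `d`, giving
`dᵀg(z) = −(dᵀn⁺) u_p(z)`. The claim is then the exact second-order expansion
`f(z + t d) = f(z) + t dᵀg(z) + ½ t² dᵀGd`.
-/

open Matrix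

namespace Matrix

section

variable {m k R : Type*} [CommRing R]

theorem fromCols_replicateCol_mulVec [Fintype k] (P : Matrix m k R) (p : m → R)
    (v : k ⊕ Unit → R) :
    fromCols P (replicateCol Unit p) *ᵥ v = P *ᵥ (v ∘ Sum.inl) + v (Sum.inr ()) • p := by
  ext i
  simp [mulVec, dotProduct, replicateCol, mul_comm]

theorem dotProduct_mulVec_add_smul_self [Fintype m] {G : Matrix m m R} (hG : G.IsSymm)
    (z d : m → R) (t : R) :
    (z + t • d) ⬝ᵥ G *ᵥ (z + t • d)
      = z ⬝ᵥ G *ᵥ z + 2 * t * (d ⬝ᵥ G *ᵥ z) + t ^ 2 * (d ⬝ᵥ G *ᵥ d) := by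
  have hsym : z ⬝ᵥ G *ᵥ d = d ⬝ᵥ G *ᵥ z := by
    rw [dotProduct_mulVec, ← mulVec_transpose, hG.eq, dotProduct_comm]
  simp only [mulVec_add, mulVec_smul, add_dotProduct, dotProduct_add, dotProduct_smul,
    smul_dotProduct, smul_eq_mul, hsym]
  ring

end

section

variable {m k R : Type*} [Fintype m] [DecidableEq m] [Fintype k] [DecidableEq k] [CommRing R]

noncomputable def obliquePinv (G : Matrix m m R) (P : Matrix m k R) : Matrix k m R :=
  (Pᵀ * G⁻¹ * P)⁻¹ * Pᵀ * G⁻¹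

noncomputable def projectedInv (G : Matrix m m R) (P : Matrix m k R) : Matrix m m R :=
  G⁻¹ * (1 - P * obliquePinv G P)

variable {G : Matrix m m R} {P : Matrix m k R}

theorem transpose_mul_projectedInv (hP : IsUnit (Pᵀ * G⁻¹ * P).det) :
    Pᵀ * projectedInv G P = 0 := by
  rw [projectedInv, obliquePinv, ← Matrix.mul_assoc, Matrix.mul_sub, Matrix.mul_one,
    ← Matrix.mul_assoc, Matrix.mul_assoc (Pᵀ * G⁻¹ * P)⁻¹,
    mul_nonsing_inv_cancel_left _ _ hP, sub_self]

theorem mul_projectedInv (hG : IsUnit G.det) :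
    G * projectedInv G P = 1 - P * obliquePinv G P := by
  rw [projectedInv, ← Matrix.mul_assoc, mul_nonsing_inv G hG, Matrix.one_mul]

theorem transpose_mulVec_projectedInv_mulVec (hP : IsUnit (Pᵀ * G⁻¹ * P).det) (p : m → R) :
    Pᵀ *ᵥ (projectedInv G P *ᵥ p) = 0 := by
  rw [mulVec_mulVec, transpose_mul_projectedInv hP, zero_mulVec]

theorem eq_mulVec_obliquePinv_of_projectedInv_mulVec_eq_zero (hG : IsUnit G.det) {v : m → R}
    (hv : projectedInv G P *ᵥ v = 0) : v = P *ᵥ (obliquePinv G P *ᵥ v) := by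
  have h := congrArg (G *ᵥ ·) hv
  rwa [mulVec_zero, mulVec_mulVec, mul_projectedInv hG, sub_mulVec, one_mulVec, sub_eq_zero,
    ← mulVec_mulVec] at h

theorem projectedInv_mulVec_dotProduct_mulVec_self (hG : IsUnit G.det)
    (hP : IsUnit (Pᵀ * G⁻¹ * P).det) (p : m → R) :
    (projectedInv G P *ᵥ p) ⬝ᵥ G *ᵥ (projectedInv G P *ᵥ p) = (projectedInv G P *ᵥ p) ⬝ᵥ p := by
  rw [mulVec_mulVec _ G, mul_projectedInv hG, sub_mulVec, one_mulVec, ← mulVec_mulVec,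
    dotProduct_sub, dotProduct_mulVec _ P, ← mulVec_transpose,
    transpose_mulVec_projectedInv_mulVec hP, zero_dotProduct, sub_zero]

end

end Matrix

theorem stmt_5_general {n q : ℕ} (G : Matrix (Fin n) (Fin n) ℝ)
    (hGsym : G.IsSymm) (hG : IsUnit G.det)
    (N : Matrix (Fin n) (Fin q) ℝ) (nplus : Fin n → ℝ)
    (Nplus : Matrix (Fin n) (Fin q ⊕ Unit) ℝ)
    (hNplus : Nplus = Matrix.fromCols N (Matrix.replicateCol Unit nplus))
    (hN : IsUnit (Nᵀ * G⁻¹ * N).det)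
    (H Hplus : Matrix (Fin n) (Fin n) ℝ)
    (hH : H = G⁻¹ * (1 - N * ((Nᵀ * G⁻¹ * N)⁻¹ * Nᵀ * G⁻¹)))
    (hHplus : Hplus = G⁻¹ * (1 - Nplus * ((Nplusᵀ * G⁻¹ * Nplus)⁻¹ * Nplusᵀ * G⁻¹)))
    (c : Fin n → ℝ)
    (f : (Fin n → ℝ) → ℝ) (hf : ∀ w, f w = (1 / 2) * (w ⬝ᵥ G *ᵥ w) + c ⬝ᵥ w)
    (g : (Fin n → ℝ) → Fin n → ℝ) (hg : ∀ w, g w = G *ᵥ w + c)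
    (d : Fin n → ℝ) (hd : d = H *ᵥ nplus)
    (z : Fin n → ℝ) (hz : Hplus *ᵥ g z = 0)
    (up : ℝ)
    (hup : up = (-(((Nplusᵀ * G⁻¹ * Nplus)⁻¹ * Nplusᵀ * G⁻¹) *ᵥ g z)) (Sum.inr ())) :
    ∀ t : ℝ, f (z + t • d) = f z + t * (d ⬝ᵥ nplus) * (t / 2 - up) := by
  intro t
  replace hd : d = projectedInv G N *ᵥ nplus := by subst hH; exact hd
  have hNd : Nᵀ *ᵥ d = 0 := by rw [hd]; exact transpose_mulVec_projectedInv_mulVec hN nplus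
  have hdGd : d ⬝ᵥ G *ᵥ d = d ⬝ᵥ nplus := by
    rw [hd]; exact projectedInv_mulVec_dotProduct_mulVec_self hG hN nplus
  set v := obliquePinv G Nplus *ᵥ g z
  have hgz : g z = Nplus *ᵥ v := by
    subst hHplus; exact eq_mulVec_obliquePinv_of_projectedInv_mulVec_eq_zero hG hz
  have hdg : d ⬝ᵥ (G *ᵥ z + c) = -(d ⬝ᵥ nplus) * up := by
    rw [← hg, hgz, hNplus, fromCols_replicateCol_mulVec, dotProduct_add, dotProduct_mulVec,
      ← mulVec_transpose, hNd, zero_dotProduct, dotProduct_smul, hup]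
    simp only [smul_eq_mul, Pi.neg_apply, v, obliquePinv, hNplus]
    ring
  rw [hf, hf, dotProduct_mulVec_add_smul_self hGsym, hdGd, dotProduct_add, dotProduct_smul,
    smul_eq_mul, dotProduct_comm c d]
  linear_combination t * hdg - t * dotProduct_add d (G *ᵥ z) c

/-- Change of the quadratic objective along the step `d = H n⁺` from a stationary point:
`f(z̄) = f(z) + t (dᵀn⁺)(t/2 − u_p(z))`. -/
theorem stmt_5 {n q : ℕ} (G : Matrix (Fin n) (Fin n) ℝ)
    (hGsym : G.IsSymm) (hG : IsUnit G.det)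
    (N : Matrix (Fin n) (Fin q) ℝ) (nplus : Fin n → ℝ)
    (Nplus : Matrix (Fin n) (Fin q ⊕ Unit) ℝ)
    (hNplus : Nplus = Matrix.fromCols N (Matrix.replicateCol Unit nplus))
    (hN : IsUnit (Nᵀ * G⁻¹ * N).det)
    (hNp : IsUnit (Nplusᵀ * G⁻¹ * Nplus).det)
    (H Hplus : Matrix (Fin n) (Fin n) ℝ)
    (hH : H = G⁻¹ * (1 - N * ((Nᵀ * G⁻¹ * N)⁻¹ * Nᵀ * G⁻¹)))
    (hHplus : Hplus = G⁻¹ * (1 - Nplus * ((Nplusᵀ * G⁻¹ * Nplus)⁻¹ * Nplusᵀ * G⁻¹)))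
    (c : Fin n → ℝ)
    (f : (Fin n → ℝ) → ℝ) (hf : ∀ w, f w = (1 / 2) * (w ⬝ᵥ G *ᵥ w) + c ⬝ᵥ w)
    (g : (Fin n → ℝ) → Fin n → ℝ) (hg : ∀ w, g w = G *ᵥ w + c)
    (d : Fin n → ℝ) (hd : d = H *ᵥ nplus)
    (z : Fin n → ℝ) (hz : Hplus *ᵥ g z = 0)
    (up : ℝ)
    (hup : up = (-(((Nplusᵀ * G⁻¹ * Nplus)⁻¹ * Nplusᵀ * G⁻¹) *ᵥ g z)) (Sum.inr ())) :
    ∀ t : ℝ, f (z + t • d) = f z + t * (d ⬝ᵥ nplus) * (t / 2 - up) :=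
  stmt_5_general G hGsym hG N nplus Nplus hNplus hN H Hplus hH hHplus c f hf g hg d hd z hz up hup
end

section
/- Let G = [[G₁₁, G₁₂],[G₁₂ᵀ, G₂₂]] be a symmetric block matrix with G₁₁ symmetric n_x×n_x and G₂₂ symmetric negative definite n_y×n_y. Let A be an m×n_x matrix and B an m×n_y matrix, and for an index set α ⊆ {1,…,m} such that B_α (the rows of B indexed by α) has full row rank, define Γ_α = G₁₁ − [G₁₂ A_αᵀ]·[[G₂₂, B_αᵀ],[B_α, 0]]⁻¹·[G₁₂ᵀ; A_α] (the block matrix [[G₂₂, B_αᵀ],[B_α, 0]] is invertible since G₂₂ is negative definite and B_α has full row rank). If ᾱ ⊆ α and Γ_α is positive definite, then Γ_ᾱ − Γ_α is positive semi-definite; in particular Γ_ᾱ ⪰ Γ_α ≻ 0. -/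
/-!
For `x` fixed, `x ⬝ᵥ Γ_s *ᵥ x` is the value of the quadratic form of `G` at `(x, y)`, where `y`
is the stationary point (read off from the inverse of the KKT matrix) of the concave function
`y ↦ [x; y]ᵀ G [x; y]` on the affine set `B_s y = -A_s x`; being concave, it attains its maximum
there. Shrinking `s` enlarges the feasible set, so the maximum can only grow:
`Γ_α ⪯ Γ_ᾱ` for `ᾱ ⊆ α`.
-/

open Matrix

/-- The Schur-complement-type matrix `Γ_s` associated with an index set `s` of
constraints: `Γ_s = G₁₁ − [G₁₂ A_sᵀ]·[[G₂₂, B_sᵀ],[B_s, 0]]⁻¹·[G₁₂ᵀ; A_s]`. -/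
noncomputable def GammaSet {nx ny m : ℕ}
    (G11 : Matrix (Fin nx) (Fin nx) ℝ) (G12 : Matrix (Fin nx) (Fin ny) ℝ)
    (G22 : Matrix (Fin ny) (Fin ny) ℝ)
    (A : Matrix (Fin m) (Fin nx) ℝ) (B : Matrix (Fin m) (Fin ny) ℝ)
    (s : Finset (Fin m)) : Matrix (Fin nx) (Fin nx) ℝ :=
  let As : Matrix {i // i ∈ s} (Fin nx) ℝ := Matrix.of fun i j => A i.val j
  let Bs : Matrix {i // i ∈ s} (Fin ny) ℝ := Matrix.of fun i j => B i.val j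
  G11 - Matrix.fromCols G12 Asᵀ * (Matrix.fromBlocks G22 Bsᵀ Bs 0)⁻¹ *
    Matrix.fromRows G12ᵀ As

section KKT

variable {n p k : Type*} [Fintype n] [Fintype p] [Fintype k]

def kktMatrix (G22 : Matrix p p ℝ) (B : Matrix k p ℝ) : Matrix (p ⊕ k) (p ⊕ k) ℝ :=
  fromBlocks G22 Bᵀ B 0

/-- The quadratic form of the block matrix `[[G₁₁, G₁₂], [G₁₂ᵀ, G₂₂]]` at `(x, y)`. -/
def blockQuadForm (G11 : Matrix n n ℝ) (G12 : Matrix n p ℝ) (G22 : Matrix p p ℝ)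
    (x : n → ℝ) (y : p → ℝ) : ℝ :=
  x ⬝ᵥ G11 *ᵥ x + 2 * (x ⬝ᵥ G12 *ᵥ y) + y ⬝ᵥ G22 *ᵥ y

structure IsKKTPoint (G12 : Matrix n p ℝ) (G22 : Matrix p p ℝ) (A : Matrix k n ℝ)
    (B : Matrix k p ℝ) (x : n → ℝ) (y : p → ℝ) (l : k → ℝ) : Prop where
  stationary : G22 *ᵥ y + Bᵀ *ᵥ l = -(G12ᵀ *ᵥ x)
  feasible : B *ᵥ y = -(A *ᵥ x)

variable {G11 : Matrix n n ℝ} {G12 : Matrix n p ℝ} {G22 : Matrix p p ℝ}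
  {A : Matrix k n ℝ} {B : Matrix k p ℝ}

theorem isKKTPoint_iff_kktMatrix_mulVec {x : n → ℝ} {y : p → ℝ} {l : k → ℝ} :
    IsKKTPoint G12 G22 A B x y l ↔
      kktMatrix G22 B *ᵥ Sum.elim y l = -Sum.elim (G12ᵀ *ᵥ x) (A *ᵥ x) := by
  rw [kktMatrix, fromBlocks_mulVec, ← Sum.elim_neg_neg, Sum.elim_eq_iff]
  simp only [Sum.elim_comp_inl, Sum.elim_comp_inr, zero_mulVec, add_zero]
  exact ⟨fun h => ⟨h.stationary, h.feasible⟩, fun h => ⟨h.1, h.2⟩⟩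

theorem blockQuadForm_le_of_isKKTPoint (hG22 : G22.IsSymm) (hG22nsd : (-G22).PosSemidef)
    {x : n → ℝ} {y y' : p → ℝ} {l : k → ℝ} (h : IsKKTPoint G12 G22 A B x y l)
    (hy' : B *ᵥ y' = -(A *ᵥ x)) :
    blockQuadForm G11 G12 G22 x y' ≤ blockQuadForm G11 G12 G22 x y := by
  set d := y' - y
  have hBd : B *ᵥ d = 0 := by rw [mulVec_sub, hy', h.feasible, sub_self]
  have hfirst : x ⬝ᵥ G12 *ᵥ d + y ⬝ᵥ G22 *ᵥ d = 0 := by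
    have hgrad : G12ᵀ *ᵥ x + G22 *ᵥ y = -(Bᵀ *ᵥ l) := by
      rw [← neg_neg (G12ᵀ *ᵥ x), ← h.stationary]
      abel
    rw [← hG22.eq, dotProduct_mulVec x, dotProduct_mulVec y, ← mulVec_transpose,
      vecMul_transpose, ← add_dotProduct, hgrad, neg_dotProduct, mulVec_transpose,
      ← dotProduct_mulVec, hBd, dotProduct_zero, neg_zero]
  have hsecond : d ⬝ᵥ G22 *ᵥ d ≤ 0 := by
    simpa [neg_mulVec] using hG22nsd.dotProduct_mulVec_nonneg d
  have hsymm : d ⬝ᵥ G22 *ᵥ y = y ⬝ᵥ G22 *ᵥ d := by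
    rw [dotProduct_mulVec, ← mulVec_transpose, hG22.eq, dotProduct_comm]
  have hy'd : y' = y + d := (add_sub_cancel y y').symm
  rw [hy'd, blockQuadForm, blockQuadForm, mulVec_add, mulVec_add]
  simp only [dotProduct_add, add_dotProduct]
  linarith

variable [DecidableEq p] [DecidableEq k]

noncomputable def kktSchur (G11 : Matrix n n ℝ) (G12 : Matrix n p ℝ) (G22 : Matrix p p ℝ)
    (A : Matrix k n ℝ) (B : Matrix k p ℝ) : Matrix n n ℝ :=
  G11 - fromCols G12 Aᵀ * (kktMatrix G22 B)⁻¹ * fromRows G12ᵀ A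

/-- If `G₂₂ ≺ 0` and `B` has independent rows, then `G₂₂ y + Bᵀ l = 0`, `B y = 0` force
`yᵀG₂₂y = -(B y)ᵀl = 0`, hence `y = 0`, and then `Bᵀ l = 0` forces `l = 0`. -/
theorem det_kktMatrix_ne_zero (hG22 : (-G22).PosDef) (hB : LinearIndependent ℝ B.row) :
    (kktMatrix G22 B).det ≠ 0 := by
  rw [Ne, ← exists_mulVec_eq_zero_iff]
  rintro ⟨v, hv, hMv⟩
  rw [← Sum.elim_comp_inl_inr v, kktMatrix, fromBlocks_mulVec] at hMv
  simp only [Sum.elim_comp_inl, Sum.elim_comp_inr, zero_mulVec, add_zero,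
    ← Sum.elim_zero_zero, Sum.elim_eq_iff] at hMv
  obtain ⟨hstat, hfeas⟩ := hMv
  have hy : v ∘ Sum.inl = 0 := by
    by_contra hy
    have hpos := hG22.dotProduct_mulVec_pos hy
    have hzero : (v ∘ Sum.inl) ⬝ᵥ G22 *ᵥ (v ∘ Sum.inl) = 0 := by
      rw [eq_neg_of_add_eq_zero_left hstat, dotProduct_neg, mulVec_transpose,
        dotProduct_comm, ← dotProduct_mulVec, hfeas, dotProduct_zero, neg_zero]
    simp [neg_mulVec, hzero] at hpos
  have hl : v ∘ Sum.inr = 0 := by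
    rw [hy, mulVec_zero, zero_add, mulVec_transpose] at hstat
    exact (vecMul_injective_iff.mpr hB) (hstat.trans (zero_vecMul B).symm)
  exact hv (by rw [← Sum.elim_comp_inl_inr v, hy, hl, Sum.elim_zero_zero])

theorem exists_isKKTPoint (hM : (kktMatrix G22 B).det ≠ 0) (x : n → ℝ) :
    ∃ y l, IsKKTPoint G12 G22 A B x y l := by
  set v := (kktMatrix G22 B)⁻¹ *ᵥ -Sum.elim (G12ᵀ *ᵥ x) (A *ᵥ x)
  refine ⟨v ∘ Sum.inl, v ∘ Sum.inr, isKKTPoint_iff_kktMatrix_mulVec.mpr ?_⟩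
  rw [Sum.elim_comp_inl_inr, mulVec_mulVec, mul_nonsing_inv _ hM.isUnit, one_mulVec]

theorem dotProduct_kktSchur_mulVec (hM : (kktMatrix G22 B).det ≠ 0) {x : n → ℝ} {y : p → ℝ}
    {l : k → ℝ} (h : IsKKTPoint G12 G22 A B x y l) :
    x ⬝ᵥ kktSchur G11 G12 G22 A B *ᵥ x = blockQuadForm G11 G12 G22 x y := by
  have hsol : (kktMatrix G22 B)⁻¹ *ᵥ Sum.elim (G12ᵀ *ᵥ x) (A *ᵥ x) = -Sum.elim y l := by
    rw [isKKTPoint_iff_kktMatrix_mulVec.mp h |> neg_eq_iff_eq_neg.mpr |>.symm, mulVec_neg,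
      mulVec_mulVec, nonsing_inv_mul _ hM.isUnit, one_mulVec]
  have hyy : y ⬝ᵥ G22 *ᵥ y = -(x ⬝ᵥ G12 *ᵥ y) + x ⬝ᵥ Aᵀ *ᵥ l := by
    rw [eq_sub_of_add_eq h.stationary, dotProduct_sub, dotProduct_neg, dotProduct_mulVec y G12ᵀ,
      vecMul_transpose, dotProduct_comm (G12 *ᵥ y), dotProduct_mulVec y Bᵀ,
      vecMul_transpose, h.feasible, dotProduct_mulVec x Aᵀ, vecMul_transpose, neg_dotProduct]
    ring
  rw [kktSchur, sub_mulVec, ← mulVec_mulVec, ← mulVec_mulVec, fromRows_mulVec, hsol,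
    mulVec_neg, fromCols_mulVec_sumElim, blockQuadForm, hyy]
  simp only [dotProduct_sub, dotProduct_neg, dotProduct_add]
  ring

omit [Fintype n] in
theorem isHermitian_kktSchur (hG11 : G11.IsSymm) (hG22 : G22.IsSymm) :
    (kktSchur G11 G12 G22 A B).IsHermitian := by
  have hM : (kktMatrix G22 B)ᵀ = kktMatrix G22 B := by
    rw [kktMatrix, fromBlocks_transpose, transpose_transpose, hG22.eq, transpose_zero]
  have hRows : fromRows G12ᵀ A = (fromCols G12 Aᵀ)ᵀ := by
    rw [transpose_fromCols, transpose_transpose]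
  rw [IsHermitian, conjTranspose_eq_transpose_of_trivial, kktSchur, hRows, transpose_sub,
    hG11.eq, transpose_mul, transpose_mul, transpose_transpose, transpose_nonsing_inv, hM,
    Matrix.mul_assoc]

theorem dotProduct_kktSchur_mulVec_le_submatrix {k' : Type*} [Fintype k'] [DecidableEq k']
    (hG22 : G22.IsSymm) (hG22nd : (-G22).PosDef) (hB : LinearIndependent ℝ B.row)
    (e : k' → k) (he : Function.Injective e) (x : n → ℝ) :
    x ⬝ᵥ kktSchur G11 G12 G22 A B *ᵥ x ≤
      x ⬝ᵥ kktSchur G11 G12 G22 (A.submatrix e id) (B.submatrix e id) *ᵥ x := by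
  have hM := det_kktMatrix_ne_zero hG22nd hB
  have hMe := det_kktMatrix_ne_zero (B := B.submatrix e id) hG22nd (hB.comp e he)
  obtain ⟨y, l, h⟩ := exists_isKKTPoint (G12 := G12) (A := A) hM x
  obtain ⟨y', l', h'⟩ := exists_isKKTPoint (G12 := G12) (A := A.submatrix e id) hMe x
  rw [dotProduct_kktSchur_mulVec hM h, dotProduct_kktSchur_mulVec hMe h']
  exact blockQuadForm_le_of_isKKTPoint hG22 hG22nd.posSemidef h' (congrArg (· ∘ e) h.feasible)

end KKT

/-- Monotonicity of `Γ`: dropping constraints can only increase `Γ` in the Loewner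
order, so `Γ_ᾱ ⪰ Γ_α ≻ 0`. -/
theorem stmt_6 {nx ny m : ℕ}
    (G11 : Matrix (Fin nx) (Fin nx) ℝ) (G12 : Matrix (Fin nx) (Fin ny) ℝ)
    (G22 : Matrix (Fin ny) (Fin ny) ℝ)
    (hG11 : G11.IsSymm) (hG22 : G22.IsSymm) (hG22nd : (-G22).PosDef)
    (A : Matrix (Fin m) (Fin nx) ℝ) (B : Matrix (Fin m) (Fin ny) ℝ)
    (α ᾱ : Finset (Fin m)) (hsub : ᾱ ⊆ α)
    (hBα : LinearIndependent ℝ (fun i : {i // i ∈ α} => B i.val))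
    (hΓα : (GammaSet G11 G12 G22 A B α).PosDef) :
    (GammaSet G11 G12 G22 A B ᾱ - GammaSet G11 G12 G22 A B α).PosSemidef ∧
    (GammaSet G11 G12 G22 A B ᾱ).PosDef := by
  -- `GammaSet … s` is `kktSchur` of the rows of `A` and `B` indexed by `s`, definitionally.
  have hle (x : Fin nx → ℝ) :
      x ⬝ᵥ GammaSet G11 G12 G22 A B α *ᵥ x ≤ x ⬝ᵥ GammaSet G11 G12 G22 A B ᾱ *ᵥ x :=
    dotProduct_kktSchur_mulVec_le_submatrix (B := B.submatrix Subtype.val id) hG22 hG22nd hBα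
      (fun i : ᾱ => ⟨i, hsub i.2⟩) (fun _ _ h => Subtype.ext (Subtype.mk_eq_mk.mp h)) x
  have hherm (s : Finset (Fin m)) : (GammaSet G11 G12 G22 A B s).IsHermitian :=
    isHermitian_kktSchur hG11 hG22
  refine ⟨.of_dotProduct_mulVec_nonneg ((hherm ᾱ).sub (hherm α)) fun x => ?_,
    .of_dotProduct_mulVec_pos (hherm ᾱ) fun x hx => ?_⟩
  · rw [star_trivial, sub_mulVec, dotProduct_sub, sub_nonneg]
    exact hle x
  · exact (hΓα.dotProduct_mulVec_pos hx).trans_le (by simpa only [star_trivial] using hle x)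
end

section
/- Let G be an invertible symmetric real n×n matrix and let N_α = [N_ᾱ N_β] be a real n×q matrix partitioned into column blocks, such that N_αᵀG⁻¹N_α is negative definite. Define H_P = G⁻¹ − G⁻¹P(PᵀG⁻¹P)⁻¹PᵀG⁻¹ for P ∈ {N_ᾱ, N_α}. Then H_α − H_ᾱ is positive semi-definite; i.e., nᵀH_ᾱ n ≤ nᵀH_α n for every n ∈ ℝⁿ. -/
/-!
Write `A = G⁻¹` and `W = PᵀAP`. Completing the square gives
`(x + P z)ᵀ A (x + P z) = xᵀ H_P x + (z - z₀)ᵀ W (z - z₀)` with `z₀ = -W⁻¹PᵀAx`, so when `W` is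
negative definite, `xᵀ H_P x` is the maximum of the quadratic form of `A` over the affine space
`x + range P`, attained at `z₀`. As `range N_ᾱ ⊆ range N_α`, the maximum for `N_α` dominates the one
for `N_ᾱ`, which is attained since `N_ᾱᵀ A N_ᾱ` is a principal submatrix of `N_αᵀ A N_α`.
-/

open Matrix

section Algebra

variable {R : Type*} [CommRing R] {m k : Type*} [Fintype m] [Fintype k] {A : Matrix m m R}

lemma mulVec_dotProduct (P : Matrix m k R) (u : k → R) (w : m → R) :
    (P *ᵥ u) ⬝ᵥ w = u ⬝ᵥ Pᵀ *ᵥ w := by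
  rw [dotProduct_transpose_mulVec, dotProduct_comm]

lemma dotProduct_mulVec_add_mulVec_of_orthogonal (hA : A.IsSymm) {P : Matrix m k R} {v : m → R}
    (hv : Pᵀ *ᵥ (A *ᵥ v) = 0) (u : k → R) :
    (v + P *ᵥ u) ⬝ᵥ A *ᵥ (v + P *ᵥ u) = v ⬝ᵥ A *ᵥ v + u ⬝ᵥ (Pᵀ * A * P) *ᵥ u := by
  have hcross : (P *ᵥ u) ⬝ᵥ A *ᵥ v = 0 := by rw [mulVec_dotProduct, hv, dotProduct_zero]
  have hcross' : v ⬝ᵥ A *ᵥ (P *ᵥ u) = 0 := by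
    rw [← hA.eq, dotProduct_transpose_mulVec, hcross]
  rw [mulVec_add, dotProduct_add, add_dotProduct, add_dotProduct, hcross, hcross',
    mulVec_dotProduct, mulVec_mulVec, mulVec_mulVec]
  ring

variable [DecidableEq k]

/-- `H_P` of the paper, with `A = G⁻¹`: the top-left block of the inverse of `!![G, P; Pᵀ, 0]`. -/
noncomputable def constrainedInv (A : Matrix m m R) (P : Matrix m k R) : Matrix m m R :=
  A - A * P * (Pᵀ * A * P)⁻¹ * Pᵀ * A

noncomputable def stationaryPoint (A : Matrix m m R) (P : Matrix m k R) (x : m → R) : k → R :=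
  -((Pᵀ * A * P)⁻¹ *ᵥ (Pᵀ *ᵥ (A *ᵥ x)))

variable {P : Matrix m k R}

lemma isSymm_constrainedInv (hA : A.IsSymm) : (constrainedInv A P).IsSymm := by
  simp only [IsSymm, constrainedInv, transpose_sub, transpose_mul, transpose_nonsing_inv,
    transpose_transpose, hA.eq, Matrix.mul_assoc]

lemma transpose_mulVec_mulVec_add_stationaryPoint (hW : IsUnit (Pᵀ * A * P).det) (x : m → R) :
    Pᵀ *ᵥ (A *ᵥ (x + P *ᵥ stationaryPoint A P x)) = 0 := by
  simp only [stationaryPoint, mulVec_add, mulVec_neg, mulVec_mulVec, ← Matrix.mul_assoc,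
    mul_nonsing_inv _ hW, Matrix.one_mul, add_neg_cancel]

lemma dotProduct_mulVec_add_stationaryPoint (hW : IsUnit (Pᵀ * A * P).det) (x : m → R) :
    (x + P *ᵥ stationaryPoint A P x) ⬝ᵥ A *ᵥ (x + P *ᵥ stationaryPoint A P x)
      = x ⬝ᵥ constrainedInv A P *ᵥ x := by
  set v := x + P *ᵥ stationaryPoint A P x
  calc v ⬝ᵥ A *ᵥ v = x ⬝ᵥ A *ᵥ v := by
        rw [add_dotProduct, mulVec_dotProduct, transpose_mulVec_mulVec_add_stationaryPoint hW,
          dotProduct_zero, add_zero]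
    _ = x ⬝ᵥ constrainedInv A P *ᵥ x := by
        rw [constrainedInv, sub_mulVec, dotProduct_sub, mulVec_add, dotProduct_add, stationaryPoint,
          mulVec_neg, mulVec_neg, dotProduct_neg, sub_eq_add_neg]
        simp only [mulVec_mulVec, Matrix.mul_assoc]

lemma dotProduct_mulVec_add_mulVec (hA : A.IsSymm) (hW : IsUnit (Pᵀ * A * P).det)
    (x : m → R) (z : k → R) :
    (x + P *ᵥ z) ⬝ᵥ A *ᵥ (x + P *ᵥ z) = x ⬝ᵥ constrainedInv A P *ᵥ x
      + (z - stationaryPoint A P x) ⬝ᵥ (Pᵀ * A * P) *ᵥ (z - stationaryPoint A P x) := by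
  have hsplit : x + P *ᵥ z
      = (x + P *ᵥ stationaryPoint A P x) + P *ᵥ (z - stationaryPoint A P x) := by
    rw [mulVec_sub]; abel
  rw [hsplit, dotProduct_mulVec_add_mulVec_of_orthogonal hA
    (transpose_mulVec_mulVec_add_stationaryPoint hW x),
    dotProduct_mulVec_add_stationaryPoint hW]

end Algebra

section Real

variable {m k l : Type*} [Fintype m] [Fintype k] [Fintype l] [DecidableEq k] [DecidableEq l]
  {A : Matrix m m ℝ}

lemma isUnit_det_of_posDef_neg {M : Matrix k k ℝ} (hM : (-M).PosDef) : IsUnit M.det :=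
  (isUnit_iff_isUnit_det M).mp (by simpa using hM.isUnit.neg)

lemma dotProduct_mulVec_add_mulVec_le (hA : A.IsSymm) {P : Matrix m k ℝ}
    (hW : (-(Pᵀ * A * P)).PosDef) (x : m → ℝ) (z : k → ℝ) :
    (x + P *ᵥ z) ⬝ᵥ A *ᵥ (x + P *ᵥ z) ≤ x ⬝ᵥ constrainedInv A P *ᵥ x := by
  have hneg := hW.posSemidef.dotProduct_mulVec_nonneg (z - stationaryPoint A P x)
  rw [star_trivial, neg_mulVec, dotProduct_neg, neg_nonneg] at hneg
  rw [dotProduct_mulVec_add_mulVec hA (isUnit_det_of_posDef_neg hW)]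
  linarith

lemma dotProduct_constrainedInv_mulVec_le (hA : A.IsSymm) {P : Matrix m k ℝ} {Q : Matrix m l ℝ}
    (hPQ : LinearMap.range P.mulVecLin ≤ LinearMap.range Q.mulVecLin)
    (hP : IsUnit (Pᵀ * A * P).det) (hQ : (-(Qᵀ * A * Q)).PosDef) (x : m → ℝ) :
    x ⬝ᵥ constrainedInv A P *ᵥ x ≤ x ⬝ᵥ constrainedInv A Q *ᵥ x := by
  obtain ⟨w, hw⟩ := hPQ ⟨stationaryPoint A P x, rfl⟩
  rw [mulVecLin_apply, mulVecLin_apply] at hw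
  rw [← dotProduct_mulVec_add_stationaryPoint hP, ← hw]
  exact dotProduct_mulVec_add_mulVec_le hA hQ x w

theorem posSemidef_constrainedInv_sub (hA : A.IsSymm) {P : Matrix m k ℝ} {Q : Matrix m l ℝ}
    (hPQ : LinearMap.range P.mulVecLin ≤ LinearMap.range Q.mulVecLin)
    (hP : IsUnit (Pᵀ * A * P).det) (hQ : (-(Qᵀ * A * Q)).PosDef) :
    (constrainedInv A Q - constrainedInv A P).PosSemidef := by
  refine .of_dotProduct_mulVec_nonneg ?_ fun x => ?_
  · exact isHermitian_iff_isSymm.mpr ((isSymm_constrainedInv hA).sub (isSymm_constrainedInv hA))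
  · rw [star_trivial, sub_mulVec, dotProduct_sub, sub_nonneg]
    exact dotProduct_constrainedInv_mulVec_le hA hPQ hP hQ x

end Real

theorem stmt_7_general {n q1 q2 : ℕ} (G : Matrix (Fin n) (Fin n) ℝ)
    (hGsym : G.IsSymm)
    (Nbar : Matrix (Fin n) (Fin q1) ℝ) (Nbeta : Matrix (Fin n) (Fin q2) ℝ)
    (Nα : Matrix (Fin n) (Fin q1 ⊕ Fin q2) ℝ)
    (hNα : Nα = Matrix.fromCols Nbar Nbeta)
    (hnd : (-(Nαᵀ * G⁻¹ * Nα)).PosDef)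
    (Hbar Hα : Matrix (Fin n) (Fin n) ℝ)
    (hHbar : Hbar = G⁻¹ - G⁻¹ * Nbar * (Nbarᵀ * G⁻¹ * Nbar)⁻¹ * Nbarᵀ * G⁻¹)
    (hHα : Hα = G⁻¹ - G⁻¹ * Nα * (Nαᵀ * G⁻¹ * Nα)⁻¹ * Nαᵀ * G⁻¹) :
    (Hα - Hbar).PosSemidef := by
  have hrange : LinearMap.range Nbar.mulVecLin ≤ LinearMap.range Nα.mulVecLin := by
    rintro _ ⟨z, rfl⟩
    exact ⟨Sum.elim z 0, by simp [hNα]⟩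
  have hblock : Nbarᵀ * G⁻¹ * Nbar = (Nαᵀ * G⁻¹ * Nα).submatrix Sum.inl Sum.inl := by
    ext i j
    simp [hNα, Matrix.mul_apply]
  have hbar : (-(Nbarᵀ * G⁻¹ * Nbar)).PosDef := by
    rw [hblock]
    exact hnd.submatrix Sum.inl_injective
  subst hHbar hHα
  exact posSemidef_constrainedInv_sub hGsym.inv hrange (isUnit_det_of_posDef_neg hbar) hnd

/-- For a column-partitioned active-set matrix `N_α = [N_ᾱ N_β]` with
`N_αᵀG⁻¹N_α` negative definite, the difference `H_α − H_ᾱ` is positive semi-definite. -/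
theorem stmt_7 {n q1 q2 : ℕ} (G : Matrix (Fin n) (Fin n) ℝ)
    (hGsym : G.IsSymm) (hG : IsUnit G.det)
    (Nbar : Matrix (Fin n) (Fin q1) ℝ) (Nbeta : Matrix (Fin n) (Fin q2) ℝ)
    (Nα : Matrix (Fin n) (Fin q1 ⊕ Fin q2) ℝ)
    (hNα : Nα = Matrix.fromCols Nbar Nbeta)
    (hnd : (-(Nαᵀ * G⁻¹ * Nα)).PosDef)
    (Hbar Hα : Matrix (Fin n) (Fin n) ℝ)
    (hHbar : Hbar = G⁻¹ - G⁻¹ * Nbar * (Nbarᵀ * G⁻¹ * Nbar)⁻¹ * Nbarᵀ * G⁻¹)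
    (hHα : Hα = G⁻¹ - G⁻¹ * Nα * (Nαᵀ * G⁻¹ * Nα)⁻¹ * Nαᵀ * G⁻¹) :
    (Hα - Hbar).PosSemidef :=
  stmt_7_general G hGsym Nbar Nbeta Nα hNα hnd Hbar Hα hHbar hHα
end

section
/- Let G = [[G₁₁, G₁₂],[G₁₂ᵀ, G₂₂]] be an invertible symmetric block matrix with G₂₂ symmetric negative definite and with Γ_∅ := G₁₁ − G₁₂G₂₂⁻¹G₁₂ᵀ positive definite. Let D_α = [A_α B_α] be a q×(n_x+n_y) matrix whose B_α block has full row rank, and define Γ_α = G₁₁ − [G₁₂ A_αᵀ]·[[G₂₂, B_αᵀ],[B_α, 0]]⁻¹·[G₁₂ᵀ; A_α]. Then Γ_α is positive definite if and only if D_α G⁻¹ D_αᵀ is negative definite. -/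
open Matrix

/-!
Write `W = G₂₂⁻¹`, `P = Γ_∅`, `N = -B_α W B_αᵀ` and `R = A_α - B_α W G₁₂ᵀ`. Block inversion of
`[[G₂₂, B_αᵀ], [B_α, 0]]` and of `G` gives `Γ_α = P - Rᵀ N⁻¹ R` and
`-D_α G⁻¹ D_αᵀ = N - R P⁻¹ Rᵀ`. Now `P ≻ 0` by hypothesis and `N ≻ 0` because `-W ≻ 0` and `B_α`
has full row rank, so both matrices are Schur complements of `[[P, Rᵀ], [R, N]]` with respect to a
positive definite block, and each is positive definite exactly when that matrix is.
-/

namespace Matrix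

variable {l m n K α : Type*}

theorem posDef_submatrix_equiv [Ring K] [PartialOrder K] [StarRing K] {M : Matrix n n K}
    (e : m ≃ n) : (M.submatrix e e).PosDef ↔ M.PosDef :=
  ⟨fun h => by simpa using h.submatrix e.symm.injective, fun h => h.submatrix e.injective⟩

section PosDef

variable [Fintype m] [Fintype n] [Field K] [PartialOrder K] [StarRing K] [StarOrderedRing K]

theorem posDef_fromBlocks₁₁_iff [DecidableEq m] {A : Matrix m m K} (B : Matrix m n K)
    (D : Matrix n n K) (hA : A.PosDef) :
    (fromBlocks A B Bᴴ D).PosDef ↔ (D - Bᴴ * A⁻¹ * B).PosDef := by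
  have := hA.isUnit.invertible
  rw [posDef_iff_dotProduct_mulVec, posDef_iff_dotProduct_mulVec,
    IsHermitian.fromBlocks₁₁ _ _ hA.1]
  refine and_congr_right fun _ => ⟨fun h y hy => ?_, fun h z hz => ?_⟩
  · have hz : (-((A⁻¹ * B) *ᵥ y) ⊕ᵥ y) ≠ 0 := fun hc =>
      hy (by simpa using congr_arg (· ∘ Sum.inr) hc)
    have := h hz
    rwa [dotProduct_mulVec, schur_complement_eq₁₁ B D _ _ hA.1, neg_add_cancel,
      dotProduct_zero, zero_add, ← dotProduct_mulVec] at this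
  · rw [dotProduct_mulVec, ← Sum.elim_comp_inl_inr z, schur_complement_eq₁₁ B D _ _ hA.1]
    simp only [← dotProduct_mulVec]
    rcases eq_or_ne (z ∘ Sum.inr) 0 with hy | hy
    · have hx : z ∘ Sum.inl ≠ 0 := fun hx => hz (Sum.elim_comp_inl_inr z ▸ by simp [hx, hy])
      simpa [hy] using hA.dotProduct_mulVec_pos hx
    · exact add_pos_of_nonneg_of_pos (hA.posSemidef.dotProduct_mulVec_nonneg _) (h hy)

theorem posDef_fromBlocks₂₂_iff [DecidableEq n] (A : Matrix m m K) (B : Matrix m n K)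
    {D : Matrix n n K} (hD : D.PosDef) :
    (fromBlocks A B Bᴴ D).PosDef ↔ (A - B * D⁻¹ * Bᴴ).PosDef := by
  rw [← posDef_submatrix_equiv (Equiv.sumComm n m), Equiv.sumComm_apply,
    fromBlocks_submatrix_sum_swap_sum_swap]
  simpa using posDef_fromBlocks₁₁_iff Bᴴ A hD

theorem posDef_sub_conjTranspose_mul_inv_mul_iff [DecidableEq m] [DecidableEq n]
    {P : Matrix m m K} {N : Matrix n n K} (R : Matrix n m K) (hP : P.PosDef) (hN : N.PosDef) :
    (P - Rᴴ * N⁻¹ * R).PosDef ↔ (N - R * P⁻¹ * Rᴴ).PosDef := by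
  simpa only [conjTranspose_conjTranspose] using
    (posDef_fromBlocks₂₂_iff P Rᴴ hN).symm.trans (posDef_fromBlocks₁₁_iff Rᴴ N hP)

end PosDef

section BlockInverse

variable [CommRing α]

theorem inv_fromBlocks₂₂_of_isUnit [Fintype m] [Fintype n] [DecidableEq m] [DecidableEq n]
    (A : Matrix m m α) (B : Matrix m n α) (C : Matrix n m α) (D : Matrix n n α)
    (hD : IsUnit D) (hS : IsUnit (A - B * D⁻¹ * C)) :
    (fromBlocks A B C D)⁻¹ =
      fromBlocks (A - B * D⁻¹ * C)⁻¹ (-((A - B * D⁻¹ * C)⁻¹ * B * D⁻¹))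
        (-(D⁻¹ * C * (A - B * D⁻¹ * C)⁻¹))
        (D⁻¹ + D⁻¹ * C * (A - B * D⁻¹ * C)⁻¹ * B * D⁻¹) := by
  let := hD.invertible
  let : Invertible (A - B * ⅟D * C) := by rw [invOf_eq_nonsing_inv]; exact hS.invertible
  let := fromBlocks₂₂Invertible A B C D
  rw [← invOf_eq_nonsing_inv, invOf_fromBlocks₂₂_eq]
  simp only [invOf_eq_nonsing_inv]

theorem inv_fromBlocks₁₁_of_isUnit [Fintype m] [Fintype n] [DecidableEq m] [DecidableEq n]
    (A : Matrix m m α) (B : Matrix m n α) (C : Matrix n m α) (D : Matrix n n α)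
    (hA : IsUnit A) (hS : IsUnit (D - C * A⁻¹ * B)) :
    (fromBlocks A B C D)⁻¹ =
      fromBlocks (A⁻¹ + A⁻¹ * B * (D - C * A⁻¹ * B)⁻¹ * C * A⁻¹)
        (-(A⁻¹ * B * (D - C * A⁻¹ * B)⁻¹)) (-((D - C * A⁻¹ * B)⁻¹ * C * A⁻¹))
        (D - C * A⁻¹ * B)⁻¹ := by
  let := hA.invertible
  let : Invertible (D - C * ⅟A * B) := by rw [invOf_eq_nonsing_inv]; exact hS.invertible
  let := fromBlocks₁₁Invertible A B C D
  rw [← invOf_eq_nonsing_inv, invOf_fromBlocks₁₁_eq]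
  simp only [invOf_eq_nonsing_inv]

theorem sub_fromCols_mul_inv_fromBlocks_mul_fromRows [Fintype m] [Fintype n]
    [DecidableEq m] [DecidableEq n] (G₁₁ : Matrix l l α) (G₁₂ : Matrix l n α)
    {G₂₂ : Matrix n n α} (A : Matrix m l α) (B : Matrix m n α) (hG₂₂ : G₂₂.IsSymm)
    (hG₂₂u : IsUnit G₂₂) (hN : IsUnit (-(B * G₂₂⁻¹ * Bᵀ))) :
    G₁₁ - fromCols G₁₂ Aᵀ * (fromBlocks G₂₂ Bᵀ B 0)⁻¹ * fromRows G₁₂ᵀ A =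
      G₁₁ - G₁₂ * G₂₂⁻¹ * G₁₂ᵀ -
        (A - B * G₂₂⁻¹ * G₁₂ᵀ)ᵀ * (-(B * G₂₂⁻¹ * Bᵀ))⁻¹ * (A - B * G₂₂⁻¹ * G₁₂ᵀ) := by
  have hW : (G₂₂⁻¹)ᵀ = G₂₂⁻¹ := by rw [transpose_nonsing_inv, hG₂₂.eq]
  rw [inv_fromBlocks₁₁_of_isUnit _ _ _ _ hG₂₂u (by rwa [zero_sub]), zero_sub,
    fromCols_mul_fromBlocks, fromCols_mul_fromRows, transpose_sub, transpose_mul,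
    transpose_mul, hW, transpose_transpose]
  simp only [sub_eq_add_neg, Matrix.mul_add, Matrix.add_mul, Matrix.mul_neg, Matrix.neg_mul,
    Matrix.mul_assoc, neg_add_rev, neg_neg]
  abel

theorem neg_fromCols_mul_inv_fromBlocks_mul_transpose [Fintype l] [Fintype n]
    [DecidableEq l] [DecidableEq n] {G₁₁ : Matrix l l α} {G₁₂ : Matrix l n α}
    {G₂₂ : Matrix n n α} (A : Matrix m l α) (B : Matrix m n α) (hG₂₂ : G₂₂.IsSymm)
    (hG₂₂u : IsUnit G₂₂) (hP : IsUnit (G₁₁ - G₁₂ * G₂₂⁻¹ * G₁₂ᵀ)) :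
    -(fromCols A B * (fromBlocks G₁₁ G₁₂ G₁₂ᵀ G₂₂)⁻¹ * (fromCols A B)ᵀ) =
      -(B * G₂₂⁻¹ * Bᵀ) -
        (A - B * G₂₂⁻¹ * G₁₂ᵀ) * (G₁₁ - G₁₂ * G₂₂⁻¹ * G₁₂ᵀ)⁻¹ * (A - B * G₂₂⁻¹ * G₁₂ᵀ)ᵀ := by
  have hW : (G₂₂⁻¹)ᵀ = G₂₂⁻¹ := by rw [transpose_nonsing_inv, hG₂₂.eq]
  rw [inv_fromBlocks₂₂_of_isUnit _ _ _ _ hG₂₂u hP, transpose_fromCols,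
    fromCols_mul_fromBlocks, fromCols_mul_fromRows, transpose_sub, transpose_mul,
    transpose_mul, hW, transpose_transpose]
  simp only [sub_eq_add_neg, Matrix.mul_add, Matrix.add_mul, Matrix.mul_neg, Matrix.neg_mul,
    Matrix.mul_assoc, neg_add_rev, neg_neg]
  abel

end BlockInverse

end Matrix

theorem stmt_8_general {nx ny q : ℕ}
    (G11 : Matrix (Fin nx) (Fin nx) ℝ) (G12 : Matrix (Fin nx) (Fin ny) ℝ)
    (G22 : Matrix (Fin ny) (Fin ny) ℝ)
    (hG22 : G22.IsSymm) (hG22nd : (-G22).PosDef)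
    (G : Matrix (Fin nx ⊕ Fin ny) (Fin nx ⊕ Fin ny) ℝ)
    (hG : G = Matrix.fromBlocks G11 G12 G12ᵀ G22)
    (hΓ0 : (G11 - G12 * G22⁻¹ * G12ᵀ).PosDef)
    (Aα : Matrix (Fin q) (Fin nx) ℝ) (Bα : Matrix (Fin q) (Fin ny) ℝ)
    (hBα : LinearIndependent ℝ (fun i : Fin q => Bα i))
    (Dα : Matrix (Fin q) (Fin nx ⊕ Fin ny) ℝ)
    (hDα : Dα = Matrix.fromCols Aα Bα)
    (Γα : Matrix (Fin nx) (Fin nx) ℝ)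
    (hΓα : Γα = G11 - Matrix.fromCols G12 Aαᵀ *
      (Matrix.fromBlocks G22 Bαᵀ Bα 0)⁻¹ * Matrix.fromRows G12ᵀ Aα) :
    Γα.PosDef ↔ (-(Dα * G⁻¹ * Dαᵀ)).PosDef := by
  subst hG hDα hΓα
  have hG22u : IsUnit G22 := by simpa using hG22nd.isUnit.neg
  have hN : (-(Bα * G22⁻¹ * Bαᵀ)).PosDef := by
    have := hG22nd.inv.mul_mul_conjTranspose_same (vecMul_injective_iff.mpr hBα)
    have hinv : (-G22)⁻¹ = -G22⁻¹ := inv_eq_left_inv <| by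
      rw [neg_mul_neg, nonsing_inv_mul _ ((isUnit_iff_isUnit_det _).mp hG22u)]
    rwa [hinv, Matrix.mul_neg, Matrix.neg_mul, conjTranspose_eq_transpose_of_trivial] at this
  rw [sub_fromCols_mul_inv_fromBlocks_mul_fromRows _ _ _ _ hG22 hG22u hN.isUnit,
    neg_fromCols_mul_inv_fromBlocks_mul_transpose _ _ hG22 hG22u hΓ0.isUnit]
  simpa only [conjTranspose_eq_transpose_of_trivial] using
    posDef_sub_conjTranspose_mul_inv_mul_iff _ hΓ0 hN

/-- `Γ_α ≻ 0` if and only if `D_α G⁻¹ D_αᵀ ≺ 0`, given `G₂₂ ≺ 0` and `Γ_∅ ≻ 0`. -/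
theorem stmt_8 {nx ny q : ℕ}
    (G11 : Matrix (Fin nx) (Fin nx) ℝ) (G12 : Matrix (Fin nx) (Fin ny) ℝ)
    (G22 : Matrix (Fin ny) (Fin ny) ℝ)
    (hG11 : G11.IsSymm) (hG22 : G22.IsSymm) (hG22nd : (-G22).PosDef)
    (G : Matrix (Fin nx ⊕ Fin ny) (Fin nx ⊕ Fin ny) ℝ)
    (hG : G = Matrix.fromBlocks G11 G12 G12ᵀ G22)
    (hGinv : IsUnit G.det)
    (hΓ0 : (G11 - G12 * G22⁻¹ * G12ᵀ).PosDef)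
    (Aα : Matrix (Fin q) (Fin nx) ℝ) (Bα : Matrix (Fin q) (Fin ny) ℝ)
    (hBα : LinearIndependent ℝ (fun i : Fin q => Bα i))
    (Dα : Matrix (Fin q) (Fin nx ⊕ Fin ny) ℝ)
    (hDα : Dα = Matrix.fromCols Aα Bα)
    (Γα : Matrix (Fin nx) (Fin nx) ℝ)
    (hΓα : Γα = G11 - Matrix.fromCols G12 Aαᵀ *
      (Matrix.fromBlocks G22 Bαᵀ Bα 0)⁻¹ * Matrix.fromRows G12ᵀ Aα) :
    Γα.PosDef ↔ (-(Dα * G⁻¹ * Dαᵀ)).PosDef :=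
  stmt_8_general G11 G12 G22 hG22 hG22nd G hG hΓ0 Aα Bα hBα Dα hDα Γα hΓα
end

section
/- Let G be an invertible symmetric real n×n matrix, N a real n×q matrix with NᵀG⁻¹N negative definite, n⁺ ∈ ℝⁿ with N₊ := [N n⁺] satisfying N₊ᵀG⁻¹N₊ invertible, c ∈ ℝⁿ, g(w) = Gw + c, h ∈ ℝ^q, h_p ∈ ℝ. Write P* = (PᵀG⁻¹P)⁻¹PᵀG⁻¹, H = G⁻¹(I − N N*), H₊ = G⁻¹(I − N₊N₊*). Suppose z ∈ ℝⁿ satisfies the V-triple conditions: Nᵀz + h = 0, n⁺ᵀz + h_p > 0, H₊ g(z) = 0, and u := −N₊* g(z) ≤ 0 componentwise. Set d = H n⁺, r = −N* n⁺, and suppose k ∈ {1,…,q} satisfies r_k < 0 and t₁ := u_k/r_k = min{ u_j/r_j : r_j < 0 }, and that either dᵀn⁺ ≥ 0, or dᵀn⁺ < 0 and t₁ < −(n⁺ᵀz + h_p)/(dᵀn⁺). Let N₋ be N with its k-th column removed, h₋ the corresponding subvector of h, and assume [N₋ n⁺]ᵀG⁻¹[N₋ n⁺] is invertible. Then z̄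 = z + t₁ d satisfies the V-triple conditions for the reduced set: N₋ᵀz̄ + h₋ = 0; n⁺ᵀz̄ + h_p > 0; H₋₊ g(z̄) = 0 where H₋₊ = G⁻¹(I − [N₋ n⁺][N₋ n⁺]*); −[N₋ n⁺]* g(z̄) ≤ 0 componentwise; and N₋ᵀG⁻¹N₋ is negative definite. -/
open Matrix

/-!
Stationarity `H₊ g(z) = 0` says that `g(z) = N₊ (N₊* g(z)) = -N₊ u`, and `G H = I - N N*` gives
`G d = n⁺ + N r`, so along the step `g(z + t d) = N₊ (t (r, 1) - u)`. At `t = t₁` the `k`-th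
entry of this multiplier vector vanishes, so `g(z̄)` lies in the column space of `[N₋ n⁺]`.
Hence `H₋₊ g(z̄) = 0` and `-[N₋ n⁺]* g(z̄)` is minus the remaining multipliers, which are
nonnegative by the choice of `t₁` as the minimal ratio. Since `Nᵀ H = 0` the step keeps the
active constraints, and `N₋ᵀ G⁻¹ N₋` is a principal submatrix of `Nᵀ G⁻¹ N`.
-/

namespace DualActiveSet

section Projection

variable {m p ι : Type*} [Fintype m] [DecidableEq m] [Fintype p] [DecidableEq p]
  [Fintype ι] [DecidableEq ι]

/-- The paper's `P*`; `reducedInvHessian G P` is its `H_P`. -/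
noncomputable def pseudoInv (G : Matrix m m ℝ) (P : Matrix m p ℝ) : Matrix p m ℝ :=
  (Pᵀ * G⁻¹ * P)⁻¹ * Pᵀ * G⁻¹

noncomputable def reducedInvHessian (G : Matrix m m ℝ) (P : Matrix m p ℝ) : Matrix m m ℝ :=
  G⁻¹ * (1 - P * pseudoInv G P)

variable {G : Matrix m m ℝ} {P : Matrix m p ℝ}

theorem pseudoInv_mul_self (hP : IsUnit (Pᵀ * G⁻¹ * P).det) : pseudoInv G P * P = 1 := by
  rw [pseudoInv, Matrix.mul_assoc, Matrix.mul_assoc, ← Matrix.mul_assoc Pᵀ, nonsing_inv_mul _ hP]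

theorem pseudoInv_mulVec_mulVec (hP : IsUnit (Pᵀ * G⁻¹ * P).det) (x : p → ℝ) :
    pseudoInv G P *ᵥ (P *ᵥ x) = x := by
  rw [mulVec_mulVec, pseudoInv_mul_self hP, one_mulVec]

theorem reducedInvHessian_mulVec_mulVec (hP : IsUnit (Pᵀ * G⁻¹ * P).det) (x : p → ℝ) :
    reducedInvHessian G P *ᵥ (P *ᵥ x) = 0 := by
  rw [reducedInvHessian, ← mulVec_mulVec, sub_mulVec, one_mulVec, ← mulVec_mulVec,
    pseudoInv_mulVec_mulVec hP, sub_self, mulVec_zero]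

theorem transpose_mul_reducedInvHessian (hP : IsUnit (Pᵀ * G⁻¹ * P).det) :
    Pᵀ * reducedInvHessian G P = 0 := by
  simp only [reducedInvHessian, pseudoInv, Matrix.mul_sub, Matrix.mul_one, ← Matrix.mul_assoc,
    mul_nonsing_inv _ hP, Matrix.one_mul, sub_self]

theorem mulVec_reducedInvHessian_mulVec (hG : IsUnit G.det) (v : m → ℝ) :
    G *ᵥ (reducedInvHessian G P *ᵥ v) = v - P *ᵥ (pseudoInv G P *ᵥ v) := by
  rw [reducedInvHessian, mulVec_mulVec, ← Matrix.mul_assoc, mul_nonsing_inv _ hG,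
    Matrix.one_mul, sub_mulVec, one_mulVec, mulVec_mulVec]

theorem eq_mulVec_pseudoInv_mulVec (hG : IsUnit G.det) {v : m → ℝ}
    (hv : reducedInvHessian G P *ᵥ v = 0) : v = P *ᵥ (pseudoInv G P *ᵥ v) := by
  rw [← sub_eq_zero, ← mulVec_reducedInvHessian_mulVec hG, hv, mulVec_zero]

theorem gradient_add_smul_reducedInvHessian (hG : IsUnit G.det) {N : Matrix m ι ℝ}
    {a c z : m → ℝ} {u : ι ⊕ Unit → ℝ} {r : ι → ℝ}
    (hstat : reducedInvHessian G (fromCols N (replicateCol Unit a)) *ᵥ (G *ᵥ z + c) = 0)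
    (hu : u = -(pseudoInv G (fromCols N (replicateCol Unit a)) *ᵥ (G *ᵥ z + c)))
    (hr : r = -(pseudoInv G N *ᵥ a)) (t : ℝ) :
    G *ᵥ (z + t • (reducedInvHessian G N *ᵥ a)) + c =
      fromCols N (replicateCol Unit a) *ᵥ (t • Sum.elim r 1 - u) := by
  have hgz := eq_mulVec_pseudoInv_mulVec hG hstat
  have hGd : G *ᵥ (reducedInvHessian G N *ᵥ a) =
      fromCols N (replicateCol Unit a) *ᵥ Sum.elim r 1 := by
    rw [mulVec_reducedInvHessian_mulVec hG, fromCols_mulVec_sumElim, hr, mulVec_neg]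
    have hcol : replicateCol Unit a *ᵥ (1 : Unit → ℝ) = a := by
      ext
      simp [mulVec, dotProduct]
    rw [hcol, sub_eq_neg_add]
  rw [mulVec_add, mulVec_smul, hGd, add_right_comm, hgz, mulVec_sub, mulVec_smul, hu, mulVec_neg]
  abel

end Projection

section ColumnDeletion

variable {R m ι κ : Type*} [Semiring R] [Fintype ι] [DecidableEq ι] [Fintype κ]

theorem submatrix_val_mulVec_of_apply_eq_zero (M : Matrix m ι R) {k : ι} {x : ι → R}
    (hx : x k = 0) :
    M.submatrix id (Subtype.val : {j // j ≠ k} → ι) *ᵥ (fun j => x j) = M *ᵥ x := by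
  ext i
  simp [mulVec, dotProduct, Fintype.sum_eq_add_sum_subtype_ne _ k, hx]

theorem fromCols_submatrix_val_mulVec (M : Matrix m ι R) (B : Matrix m κ R) {k : ι}
    {v : ι ⊕ κ → R} (hv : v (Sum.inl k) = 0) :
    fromCols (M.submatrix id (Subtype.val : {j // j ≠ k} → ι)) B *ᵥ
      Sum.elim (fun j => v (Sum.inl j)) (v ∘ Sum.inr) = fromCols M B *ᵥ v := by
  rw [fromCols_mulVec, fromCols_mulVec]
  congr 1
  exact submatrix_val_mulVec_of_apply_eq_zero M (x := v ∘ Sum.inl) hv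

end ColumnDeletion

theorem nonneg_smul_sub_of_ratio_test {ι : Type*} {s u : ι → ℝ} {t : ℝ} (ht : 0 ≤ t)
    (hu : ∀ j, u j ≤ 0) (hmin : ∀ j, s j < 0 → t ≤ u j / s j) : 0 ≤ t • s - u := by
  intro j
  simp only [Pi.zero_apply, Pi.sub_apply, Pi.smul_apply, smul_eq_mul]
  rcases lt_or_ge (s j) 0 with hs | hs
  · linarith [(le_div_iff_of_neg hs).mp (hmin j hs)]
  · linarith [mul_nonneg ht hs, hu j]

theorem add_mul_pos_of_nonneg_or_lt_neg_div {a b t : ℝ} (ha : 0 < a) (ht : 0 ≤ t)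
    (hb : 0 ≤ b ∨ (b < 0 ∧ t < -a / b)) : 0 < a + t * b := by
  rcases hb with hb | ⟨hb, htb⟩
  · nlinarith
  · linarith [(lt_div_iff_of_neg hb).mp htb]

end DualActiveSet

open DualActiveSet

theorem stmt_13_general {n q : ℕ} (G : Matrix (Fin n) (Fin n) ℝ)
    (hG : IsUnit G.det)
    (N : Matrix (Fin n) (Fin q) ℝ)
    (hnd : (-(Nᵀ * G⁻¹ * N)).PosDef)
    (nplus : Fin n → ℝ)
    (Nplus : Matrix (Fin n) (Fin q ⊕ Unit) ℝ)
    (hNplus : Nplus = Matrix.fromCols N (Matrix.replicateCol Unit nplus))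
    (c : Fin n → ℝ) (g : (Fin n → ℝ) → Fin n → ℝ) (hg : ∀ w, g w = G *ᵥ w + c)
    (h : Fin q → ℝ) (hp : ℝ)
    (H Hplus : Matrix (Fin n) (Fin n) ℝ)
    (hH : H = G⁻¹ * (1 - N * ((Nᵀ * G⁻¹ * N)⁻¹ * Nᵀ * G⁻¹)))
    (hHplus : Hplus = G⁻¹ * (1 - Nplus * ((Nplusᵀ * G⁻¹ * Nplus)⁻¹ * Nplusᵀ * G⁻¹)))
    -- the V-triple conditions at z
    (z : Fin n → ℝ)
    (hact : Nᵀ *ᵥ z + h = 0)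
    (hviol : nplus ⬝ᵥ z + hp > 0)
    (hstat : Hplus *ᵥ g z = 0)
    (u : Fin q ⊕ Unit → ℝ)
    (hu : u = -(((Nplusᵀ * G⁻¹ * Nplus)⁻¹ * Nplusᵀ * G⁻¹) *ᵥ g z))
    (hu0 : ∀ j, u j ≤ 0)
    -- step direction and dual direction
    (d : Fin n → ℝ) (hd : d = H *ᵥ nplus)
    (r : Fin q → ℝ) (hr : r = -(((Nᵀ * G⁻¹ * N)⁻¹ * Nᵀ * G⁻¹) *ᵥ nplus))
    -- the dropped index and the dual step length
    (k : Fin q) (hrk : r k < 0)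
    (t₁ : ℝ) (ht₁ : t₁ = u (Sum.inl k) / r k)
    (hmin : ∀ j : Fin q, r j < 0 → t₁ ≤ u (Sum.inl j) / r j)
    (hstep : 0 ≤ d ⬝ᵥ nplus ∨
      (d ⬝ᵥ nplus < 0 ∧ t₁ < -(nplus ⬝ᵥ z + hp) / (d ⬝ᵥ nplus)))
    -- the reduced active set with the k-th column removed
    (Nm : Matrix (Fin n) {j : Fin q // j ≠ k} ℝ)
    (hNm : Nm = Matrix.of fun i j => N i j.val)
    (hm : {j : Fin q // j ≠ k} → ℝ) (hhm : hm = fun j => h j.val)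
    (Nmplus : Matrix (Fin n) ({j : Fin q // j ≠ k} ⊕ Unit) ℝ)
    (hNmplus : Nmplus = Matrix.fromCols Nm (Matrix.replicateCol Unit nplus))
    (hNmp : IsUnit (Nmplusᵀ * G⁻¹ * Nmplus).det)
    (Hmplus : Matrix (Fin n) (Fin n) ℝ)
    (hHmplus : Hmplus =
      G⁻¹ * (1 - Nmplus * ((Nmplusᵀ * G⁻¹ * Nmplus)⁻¹ * Nmplusᵀ * G⁻¹)))
    (zbar : Fin n → ℝ) (hzbar : zbar = z + t₁ • d) :
    Nmᵀ *ᵥ zbar + hm = 0 ∧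
    nplus ⬝ᵥ zbar + hp > 0 ∧
    Hmplus *ᵥ g zbar = 0 ∧
    (∀ j, (-(((Nmplusᵀ * G⁻¹ * Nmplus)⁻¹ * Nmplusᵀ * G⁻¹) *ᵥ g zbar)) j ≤ 0) ∧
    (-(Nmᵀ * G⁻¹ * Nm)).PosDef := by
  obtain rfl : Nm = N.submatrix id Subtype.val := hNm
  subst hNplus hhm
  rw [hg, hHplus] at hstat
  rw [hg] at hu
  have hd' : d = reducedInvHessian G N *ᵥ nplus := by rw [hd, hH]; rfl
  have hNdet : IsUnit (Nᵀ * G⁻¹ * N).det :=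
    (isUnit_iff_isUnit_det _).mp ((IsUnit.neg_iff _).mp hnd.isUnit)
  have ht₁0 : 0 ≤ t₁ := ht₁ ▸ div_nonneg_of_nonpos (hu0 _) hrk.le
  set v := t₁ • Sum.elim r 1 - u with hv
  have hvk : v (Sum.inl k) = 0 := by
    simp [hv, ht₁, div_mul_cancel₀ _ hrk.ne]
  have hv0 : 0 ≤ v := by
    refine nonneg_smul_sub_of_ratio_test ht₁0 hu0 ?_
    rintro (j | j) hj
    exacts [hmin j hj, absurd hj (by simp)]
  set x := Sum.elim (fun j : {j // j ≠ k} => v (Sum.inl j)) (v ∘ Sum.inr)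
  have hgzbar : g zbar = Nmplus *ᵥ x := by
    rw [hNmplus, fromCols_submatrix_val_mulVec _ _ hvk, hg, hzbar, hd']
    exact gradient_add_smul_reducedInvHessian hG hstat hu hr t₁
  refine ⟨?_, ?_, ?_, ?_, hnd.submatrix Subtype.val_injective⟩
  · have hNd : Nᵀ *ᵥ d = 0 := by
      rw [hd', mulVec_mulVec, transpose_mul_reducedInvHessian hNdet, zero_mulVec]
    have hNzbar : Nᵀ *ᵥ zbar + h = 0 := by
      rw [hzbar, mulVec_add, mulVec_smul, hNd, smul_zero, add_zero, hact]
    ext j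
    exact congrFun hNzbar j
  · rw [hzbar, dotProduct_add, dotProduct_smul, smul_eq_mul, dotProduct_comm nplus d,
      add_right_comm]
    exact add_mul_pos_of_nonneg_or_lt_neg_div hviol ht₁0 hstep
  · rw [hHmplus, hgzbar]
    exact reducedInvHessian_mulVec_mulVec hNmp x
  · rw [hgzbar, show ((Nmplusᵀ * G⁻¹ * Nmplus)⁻¹ * Nmplusᵀ * G⁻¹) *ᵥ (Nmplus *ᵥ x) = x from
      pseudoInv_mulVec_mulVec hNmp x]
    rintro (j | j) <;> simpa [x] using hv0 _

/-- Partial step of the dual algorithm: taking a dual step of length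
`t₁ = u_k / r_k` and dropping the `k`-th active constraint yields a V-triple for the
reduced active set. -/
theorem stmt_13 {n q : ℕ} (G : Matrix (Fin n) (Fin n) ℝ)
    (hGsym : G.IsSymm) (hG : IsUnit G.det)
    (N : Matrix (Fin n) (Fin q) ℝ)
    (hnd : (-(Nᵀ * G⁻¹ * N)).PosDef)
    (nplus : Fin n → ℝ)
    (Nplus : Matrix (Fin n) (Fin q ⊕ Unit) ℝ)
    (hNplus : Nplus = Matrix.fromCols N (Matrix.replicateCol Unit nplus))
    (hNp : IsUnit (Nplusᵀ * G⁻¹ * Nplus).det)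
    (c : Fin n → ℝ) (g : (Fin n → ℝ) → Fin n → ℝ) (hg : ∀ w, g w = G *ᵥ w + c)
    (h : Fin q → ℝ) (hp : ℝ)
    (H Hplus : Matrix (Fin n) (Fin n) ℝ)
    (hH : H = G⁻¹ * (1 - N * ((Nᵀ * G⁻¹ * N)⁻¹ * Nᵀ * G⁻¹)))
    (hHplus : Hplus = G⁻¹ * (1 - Nplus * ((Nplusᵀ * G⁻¹ * Nplus)⁻¹ * Nplusᵀ * G⁻¹)))
    -- the V-triple conditions at z
    (z : Fin n → ℝ)
    (hact : Nᵀ *ᵥ z + h = 0)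
    (hviol : nplus ⬝ᵥ z + hp > 0)
    (hstat : Hplus *ᵥ g z = 0)
    (u : Fin q ⊕ Unit → ℝ)
    (hu : u = -(((Nplusᵀ * G⁻¹ * Nplus)⁻¹ * Nplusᵀ * G⁻¹) *ᵥ g z))
    (hu0 : ∀ j, u j ≤ 0)
    -- step direction and dual direction
    (d : Fin n → ℝ) (hd : d = H *ᵥ nplus)
    (r : Fin q → ℝ) (hr : r = -(((Nᵀ * G⁻¹ * N)⁻¹ * Nᵀ * G⁻¹) *ᵥ nplus))
    -- the dropped index and the dual step length
    (k : Fin q) (hrk : r k < 0)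
    (t₁ : ℝ) (ht₁ : t₁ = u (Sum.inl k) / r k)
    (hmin : ∀ j : Fin q, r j < 0 → t₁ ≤ u (Sum.inl j) / r j)
    (hstep : 0 ≤ d ⬝ᵥ nplus ∨
      (d ⬝ᵥ nplus < 0 ∧ t₁ < -(nplus ⬝ᵥ z + hp) / (d ⬝ᵥ nplus)))
    -- the reduced active set with the k-th column removed
    (Nm : Matrix (Fin n) {j : Fin q // j ≠ k} ℝ)
    (hNm : Nm = Matrix.of fun i j => N i j.val)
    (hm : {j : Fin q // j ≠ k} → ℝ) (hhm : hm = fun j => h j.val)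
    (Nmplus : Matrix (Fin n) ({j : Fin q // j ≠ k} ⊕ Unit) ℝ)
    (hNmplus : Nmplus = Matrix.fromCols Nm (Matrix.replicateCol Unit nplus))
    (hNmp : IsUnit (Nmplusᵀ * G⁻¹ * Nmplus).det)
    (Hmplus : Matrix (Fin n) (Fin n) ℝ)
    (hHmplus : Hmplus =
      G⁻¹ * (1 - Nmplus * ((Nmplusᵀ * G⁻¹ * Nmplus)⁻¹ * Nmplusᵀ * G⁻¹)))
    (zbar : Fin n → ℝ) (hzbar : zbar = z + t₁ • d) :
    Nmᵀ *ᵥ zbar + hm = 0 ∧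
    nplus ⬝ᵥ zbar + hp > 0 ∧
    Hmplus *ᵥ g zbar = 0 ∧
    (∀ j, (-(((Nmplusᵀ * G⁻¹ * Nmplus)⁻¹ * Nmplusᵀ * G⁻¹) *ᵥ g zbar)) j ≤ 0) ∧
    (-(Nmᵀ * G⁻¹ * Nm)).PosDef :=
  stmt_13_general G hG N hnd nplus Nplus hNplus c g hg h hp H Hplus hH hHplus z hact hviol hstat u
    hu hu0 d hd r hr k hrk t₁ ht₁ hmin hstep Nm hNm hm hhm Nmplus hNmplus hNmp Hmplus hHmplus zbar
    hzbar
end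

section
/- Let G be an invertible symmetric real n×n matrix, N a real n×q matrix with NᵀG⁻¹N negative definite, and n⁺ ∈ ℝⁿ. Write N* = (NᵀG⁻¹N)⁻¹NᵀG⁻¹, H = G⁻¹(I − N N*), r = −N* n⁺. Let c ∈ ℝⁿ, h ∈ ℝ^q, h_p ∈ ℝ, and suppose there exist z ∈ ℝⁿ, u ∈ ℝ^q with Gz + c + N u = 0, Nᵀz + h = 0, and n⁺ᵀz + h_p > 0. If r ≥ 0 componentwise and n⁺ᵀH n⁺ ≥ 0, then there exist no z* ∈ ℝⁿ, u* ∈ ℝ^q, λ_p ≤ 0 satisfying Gz* + c + N u* + n⁺ λ_p = 0, Nᵀz* + h ≤ 0, and n⁺ᵀz* + h_p ≤ 0; i.e., the subproblem with the added constraint admits no stationary point with nonpositive multiplier on the new constraint. -/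
open Matrix

/-- Infeasibility detection: if `r ≥ 0` and `n⁺ᵀH n⁺ ≥ 0`, then the subproblem with
the added constraint admits no stationary point with nonpositive multiplier on the new
constraint. -/
theorem stmt_15 {n q : ℕ} (G : Matrix (Fin n) (Fin n) ℝ)
    (hGsym : G.IsSymm) (hG : IsUnit G.det)
    (N : Matrix (Fin n) (Fin q) ℝ)
    (hnd : (-(Nᵀ * G⁻¹ * N)).PosDef)
    (nplus : Fin n → ℝ)
    (Nstar : Matrix (Fin q) (Fin n) ℝ)
    (hNstar : Nstar = (Nᵀ * G⁻¹ * N)⁻¹ * Nᵀ * G⁻¹)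
    (H : Matrix (Fin n) (Fin n) ℝ)
    (hH : H = G⁻¹ * (1 - N * Nstar))
    (r : Fin q → ℝ) (hr : r = -(Nstar *ᵥ nplus))
    (c : Fin n → ℝ) (h : Fin q → ℝ) (hp : ℝ)
    (z : Fin n → ℝ) (u : Fin q → ℝ)
    (hz1 : G *ᵥ z + c + N *ᵥ u = 0)
    (hz2 : Nᵀ *ᵥ z + h = 0)
    (hz3 : nplus ⬝ᵥ z + hp > 0)
    (hr0 : ∀ j, 0 ≤ r j)
    (hnHn : 0 ≤ nplus ⬝ᵥ H *ᵥ nplus) :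
    ¬∃ (zstar : Fin n → ℝ) (ustar : Fin q → ℝ) (lamp : ℝ),
      lamp ≤ 0 ∧
      G *ᵥ zstar + c + N *ᵥ ustar + lamp • nplus = 0 ∧
      (∀ i, (Nᵀ *ᵥ zstar + h) i ≤ 0) ∧
      nplus ⬝ᵥ zstar + hp ≤ 0 := by
  rintro ⟨zs, us, lamp, hlam, h1, h2, h3⟩
  set M : Matrix (Fin q) (Fin q) ℝ := Nᵀ * G⁻¹ * N with hMdef
  -- G⁻¹ is symmetric
  have hGinvsym : (G⁻¹)ᵀ = G⁻¹ := by
    rw [Matrix.transpose_nonsing_inv, hGsym.eq]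
  have hMsym : Mᵀ = M := by
    simp [hMdef, Matrix.transpose_mul, hGinvsym, Matrix.mul_assoc]
  -- M is invertible
  have hMdet : IsUnit M.det := by
    have hpos := hnd.det_pos
    rw [Matrix.det_neg] at hpos
    have : M.det ≠ 0 := by
      intro h0; rw [h0, mul_zero] at hpos; exact lt_irrefl 0 hpos
    exact isUnit_iff_ne_zero.mpr this
  have hMinv : M⁻¹ * M = 1 := Matrix.nonsing_inv_mul M hMdet
  have hMinvsym : (M⁻¹)ᵀ = M⁻¹ := by
    rw [Matrix.transpose_nonsing_inv, hMsym]
  have hGinv : G⁻¹ * G = 1 := Matrix.nonsing_inv_mul G hG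
  set d : Fin n → ℝ := zs - z with hddef
  set w : Fin q → ℝ := us - u with hwdef
  -- basic difference equation
  have hd : G *ᵥ d + N *ᵥ w + lamp • nplus = 0 := by
    have e : (G *ᵥ zs + c + N *ᵥ us + lamp • nplus) - (G *ᵥ z + c + N *ᵥ u) = 0 := by
      rw [h1, hz1, sub_zero]
    funext i
    have := congrFun e i
    simp [hddef, hwdef, Matrix.mulVec_sub] at this ⊢
    linarith
  -- solve for d
  have hd2 : d = -(G⁻¹ *ᵥ (N *ᵥ w)) - lamp • (G⁻¹ *ᵥ nplus) := by
    have e : G *ᵥ d = -(N *ᵥ w) - lamp • nplus := by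
      funext i; have := congrFun hd i; simp at this ⊢; linarith
    calc d = (G⁻¹ * G) *ᵥ d := by rw [hGinv, Matrix.one_mulVec]
      _ = G⁻¹ *ᵥ (G *ᵥ d) := by rw [Matrix.mulVec_mulVec]
      _ = -(G⁻¹ *ᵥ (N *ᵥ w)) - lamp • (G⁻¹ *ᵥ nplus) := by
          rw [e]; funext i; simp [Matrix.mulVec_sub, Matrix.mulVec_neg, Matrix.mulVec_smul]
  set s : Fin q → ℝ := Nᵀ *ᵥ d with hsdef
  have hs0 : ∀ j, s j ≤ 0 := by
    intro j
    have e2 := congrFun hz2 j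
    have e3 := h2 j
    simp [hsdef, hddef, Matrix.mulVec_sub] at e2 e3 ⊢
    linarith
  -- express s
  have hsval : s = -(M *ᵥ w) - lamp • ((Nᵀ * G⁻¹) *ᵥ nplus) := by
    rw [hsdef, hd2]
    funext j
    simp [Matrix.mulVec_sub, Matrix.mulVec_neg, Matrix.mulVec_smul,
      Matrix.mulVec_mulVec, hMdef, Matrix.mul_assoc]
  -- solve for w
  have hwval : w = lamp • r - M⁻¹ *ᵥ s := by
    have e : M *ᵥ w = -s - lamp • ((Nᵀ * G⁻¹) *ᵥ nplus) := by
      funext j; have := congrFun hsval j; simp at this ⊢; linarith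
    have : w = (M⁻¹ * M) *ᵥ w := by rw [hMinv, Matrix.one_mulVec]
    rw [this, ← Matrix.mulVec_mulVec, e, hr, hNstar]
    funext j
    simp [Matrix.mulVec_sub, Matrix.mulVec_neg, Matrix.mulVec_smul,
      Matrix.mulVec_mulVec, Matrix.mul_assoc]
    ring
  -- express d in terms of s and H
  have hdval : d = (G⁻¹ * N * M⁻¹) *ᵥ s - lamp • (H *ᵥ nplus) := by
    rw [hd2, hwval]
    have hNr : N *ᵥ r + nplus = (1 - N * Nstar) *ᵥ nplus := by
      rw [hr]
      funext i
      simp [Matrix.sub_mulVec, Matrix.one_mulVec, Matrix.mulVec_mulVec,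
        Matrix.mulVec_neg]
      ring
    have hHn : H *ᵥ nplus = G⁻¹ *ᵥ (N *ᵥ r + nplus) := by
      rw [hNr, hH, Matrix.mulVec_mulVec]
    rw [hHn]
    funext i
    simp [Matrix.mulVec_sub, Matrix.mulVec_add, Matrix.mulVec_neg,
      Matrix.mulVec_smul, Matrix.mulVec_mulVec, Matrix.mul_assoc]
    ring
  -- key dot product computation
  have hT : (G⁻¹ * N * M⁻¹)ᵀ = Nstar := by
    rw [hNstar]
    simp [Matrix.transpose_mul, hGinvsym, hMinvsym, Matrix.mul_assoc]
  have hkey : nplus ⬝ᵥ d = (-(r) ⬝ᵥ s) - lamp * (nplus ⬝ᵥ H *ᵥ nplus) := by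
    rw [hdval]
    rw [dotProduct_sub, dotProduct_smul, Matrix.dotProduct_mulVec,
      ← Matrix.mulVec_transpose, hT]
    have : Nstar *ᵥ nplus = -r := by rw [hr]; simp
    rw [this]
    simp [smul_eq_mul]
  -- sign analysis
  have hrs : -(r) ⬝ᵥ s ≥ 0 := by
    rw [neg_dotProduct]
    have : r ⬝ᵥ s ≤ 0 := by
      apply Finset.sum_nonpos
      intro j _
      exact mul_nonpos_of_nonneg_of_nonpos (hr0 j) (hs0 j)
    linarith
  have hnd2 : nplus ⬝ᵥ d ≥ 0 := by
    rw [hkey]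
    have : lamp * (nplus ⬝ᵥ H *ᵥ nplus) ≤ 0 := mul_nonpos_of_nonpos_of_nonneg hlam hnHn
    linarith
  have hlt : nplus ⬝ᵥ d < 0 := by
    have : nplus ⬝ᵥ d = (nplus ⬝ᵥ zs + hp) - (nplus ⬝ᵥ z + hp) := by
      simp [hddef, dotProduct_sub]
    rw [this]; linarith
  linarith
end

section
/- Let G be an invertible symmetric real n×n matrix, N a real n×q matrix with −NᵀG⁻¹N = RᵀR for an invertible q×q matrix R, and M = R⁻ᵀNᵀG⁻¹. Let n⁺ ∈ ℝⁿ satisfy δ := n⁺ᵀH n⁺ < 0 where H = G⁻¹ + MᵀM, and set d₁ = M n⁺, d₂ = H n⁺, N₊ = [N n⁺]. Define the (q+1)×(q+1) matrix R₊ = [[R, −d₁],[0, √(−δ)]]. Then: (a) −N₊ᵀG⁻¹N₊ = R₊ᵀR₊; (b) R₊ is invertible with R₊⁻¹ = [[R⁻¹, R⁻¹d₁/√(−δ)],[0, 1/√(−δ)]]; (c) R₊⁻ᵀN₊ᵀG⁻¹ equals the matrix obtained by appending the row d₂ᵀ/√(−δ) below M. -/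
/-!
Since `R` is invertible, `NᵀG⁻¹ = RᵀM`; hence `NᵀG⁻¹n⁺ = Rᵀd₁` and, by the definition of `H`,
`n⁺ᵀG⁻¹n⁺ = δ - d₁ᵀd₁`. With these, the bordered Gram matrix `−N₊ᵀG⁻¹N₊` agrees block by block
with `R₊ᵀR₊`, the corner entry using `√(−δ)² = −δ`. The inverse of the block upper triangular
`R₊` is verified by multiplication, and its transpose applied to `N₊ᵀG⁻¹` keeps `M` on top and
gives the last row `(d₁ᵀM + n⁺ᵀG⁻¹)/√(−δ) = d₂ᵀ/√(−δ)`.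
-/

open Matrix

namespace Matrix

variable {K l m n : Type*}

section CommRing

variable [CommRing K]

lemma of_const_mul_of_const (a b : K) :
    (of fun _ _ => a : Matrix Unit Unit K) * of (fun _ _ => b) = of fun _ _ => a * b := by
  ext; simp [mul_apply]

lemma of_const_one : (of fun _ _ => 1 : Matrix Unit Unit K) = 1 := by
  ext; simp

lemma replicateCol_mul_of_const [Fintype l] (v : l → K) (a : K) :
    replicateCol Unit v * (of fun _ _ => a : Matrix Unit Unit K) = replicateCol Unit (a • v) := by
  ext; simp [mul_apply, mul_comm]

lemma transpose_fromCols_replicateCol_mul [Fintype n] {S : Matrix n n K} (hS : S.IsSymm)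
    (N : Matrix n m K) (v : n → K) :
    (fromCols N (replicateCol Unit v))ᵀ * S = fromRows (Nᵀ * S) (replicateRow Unit (S *ᵥ v)) := by
  rw [transpose_fromCols, transpose_replicateCol, fromRows_mul, ← replicateRow_vecMul,
    ← mulVec_transpose, hS.eq]

lemma transpose_fromCols_replicateCol_mul_mul [Fintype n] {S : Matrix n n K} (hS : S.IsSymm)
    (N : Matrix n m K) (v : n → K) :
    (fromCols N (replicateCol Unit v))ᵀ * S * fromCols N (replicateCol Unit v) =
      fromBlocks (Nᵀ * S * N) (replicateCol Unit ((Nᵀ * S) *ᵥ v))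
        (replicateRow Unit ((Nᵀ * S) *ᵥ v)) (of fun _ _ => v ⬝ᵥ S *ᵥ v) := by
  rw [transpose_fromCols_replicateCol_mul hS, fromRows_mul_fromCols, ← replicateCol_mulVec,
    ← replicateRow_vecMul, ← mulVec_transpose, mulVec_mulVec, replicateRow_mul_replicateCol,
    dotProduct_comm]

lemma transpose_fromBlocks_replicateCol (A : Matrix m n K) (u : m → K) (s : K) :
    (fromBlocks A (replicateCol Unit u) 0 (of fun _ _ => s : Matrix Unit Unit K))ᵀ =
      fromBlocks Aᵀ 0 (replicateRow Unit u) (of fun _ _ => s) := by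
  rw [fromBlocks_transpose, transpose_replicateCol, transpose_zero]
  rfl

lemma transpose_fromBlocks_replicateCol_mul_self [Fintype m] (R : Matrix m m K) (u : m → K)
    (s : K) :
    (fromBlocks R (replicateCol Unit u) 0 (of fun _ _ => s))ᵀ *
        fromBlocks R (replicateCol Unit u) 0 (of fun _ _ => s) =
      fromBlocks (Rᵀ * R) (replicateCol Unit (Rᵀ *ᵥ u)) (replicateRow Unit (Rᵀ *ᵥ u))
        (of fun _ _ => u ⬝ᵥ u + s * s) := by
  rw [transpose_fromBlocks_replicateCol, fromBlocks_multiply]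
  simp only [Matrix.zero_mul, Matrix.mul_zero, add_zero]
  rw [← replicateCol_mulVec, ← replicateRow_vecMul, ← mulVec_transpose,
    replicateRow_mul_replicateCol]
  congr 1
  ext; simp [mul_apply]

lemma fromBlocks_replicateRow_mul_fromRows [Fintype m] (A : Matrix l m K) (w : m → K) (s : K)
    (B : Matrix m n K) (v : n → K) :
    fromBlocks A 0 (replicateRow Unit w) (of fun _ _ => s : Matrix Unit Unit K) *
        fromRows B (replicateRow Unit v) =
      fromRows (A * B) (replicateRow Unit (w ᵥ* B + s • v)) := by
  rw [fromBlocks_mul_fromRows, Matrix.zero_mul, add_zero, replicateRow_add,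
    replicateRow_vecMul, replicateRow_smul]
  congr 2
  ext; simp [mul_apply]

end CommRing

lemma fromBlocks_replicateCol_neg_mul_eq_one [Field K] [Fintype m] [DecidableEq m]
    {R : Matrix m m K} (hR : IsUnit R.det) (u : m → K) {s : K} (hs : s ≠ 0) :
    fromBlocks R (replicateCol Unit (-u)) 0 (of fun _ _ => s) *
      fromBlocks R⁻¹ (replicateCol Unit (s⁻¹ • (R⁻¹ *ᵥ u))) 0 (of fun _ _ => s⁻¹) =
        (1 : Matrix (m ⊕ Unit) (m ⊕ Unit) K) := by
  rw [fromBlocks_multiply, ← fromBlocks_one]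
  simp only [Matrix.mul_zero, Matrix.zero_mul, add_zero, zero_add]
  rw [mul_nonsing_inv _ hR, of_const_mul_of_const, mul_inv_cancel₀ hs, ← replicateCol_mulVec,
    replicateCol_mul_of_const, mulVec_smul, mulVec_mulVec, mul_nonsing_inv _ hR, one_mulVec,
    smul_neg, ← replicateCol_add, add_neg_cancel, replicateCol_zero, of_const_one]

end Matrix

theorem stmt_17_general {n q : ℕ} (G : Matrix (Fin n) (Fin n) ℝ)
    (hGsym : G.IsSymm)
    (N : Matrix (Fin n) (Fin q) ℝ)
    (R : Matrix (Fin q) (Fin q) ℝ) (hR : IsUnit R.det)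
    (hRR : -(Nᵀ * G⁻¹ * N) = Rᵀ * R)
    (M : Matrix (Fin q) (Fin n) ℝ) (hM : M = Rᵀ⁻¹ * Nᵀ * G⁻¹)
    (H : Matrix (Fin n) (Fin n) ℝ) (hH : H = G⁻¹ + Mᵀ * M)
    (nplus : Fin n → ℝ)
    (δ : ℝ) (hδ : δ = nplus ⬝ᵥ H *ᵥ nplus) (hδneg : δ < 0)
    (d₁ : Fin q → ℝ) (hd₁ : d₁ = M *ᵥ nplus)
    (d₂ : Fin n → ℝ) (hd₂ : d₂ = H *ᵥ nplus)
    (Nplus : Matrix (Fin n) (Fin q ⊕ Unit) ℝ)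
    (hNplus : Nplus = Matrix.fromCols N (Matrix.replicateCol Unit nplus))
    (Rplus : Matrix (Fin q ⊕ Unit) (Fin q ⊕ Unit) ℝ)
    (hRplus : Rplus = Matrix.fromBlocks R (Matrix.replicateCol Unit (-d₁)) 0
      (Matrix.of fun _ _ => Real.sqrt (-δ))) :
    -(Nplusᵀ * G⁻¹ * Nplus) = Rplusᵀ * Rplus ∧
    IsUnit Rplus.det ∧
    Rplus⁻¹ = Matrix.fromBlocks R⁻¹
      (Matrix.replicateCol Unit ((Real.sqrt (-δ))⁻¹ • (R⁻¹ *ᵥ d₁))) 0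
      (Matrix.of fun _ _ => (Real.sqrt (-δ))⁻¹) ∧
    Rplusᵀ⁻¹ * Nplusᵀ * G⁻¹ =
      Matrix.fromRows M (Matrix.replicateRow Unit ((Real.sqrt (-δ))⁻¹ • d₂)) := by
  subst hNplus hRplus
  set s := √(-δ)
  have hs : s * s = -δ := Real.mul_self_sqrt (by linarith)
  have hs0 : s ≠ 0 := (Real.sqrt_pos.2 (by linarith)).ne'
  have hRT : IsUnit Rᵀ.det := by rwa [det_transpose]
  have hNG : Nᵀ * G⁻¹ = Rᵀ * M := by
    rw [hM, ← Matrix.mul_assoc, ← Matrix.mul_assoc, mul_nonsing_inv _ hRT, Matrix.one_mul]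
  have hNGn : (Nᵀ * G⁻¹) *ᵥ nplus = Rᵀ *ᵥ d₁ := by
    rw [hNG, hd₁, mulVec_mulVec]
  have hnGn : nplus ⬝ᵥ G⁻¹ *ᵥ nplus = δ - d₁ ⬝ᵥ d₁ := by
    rw [hδ, hH, add_mulVec, dotProduct_add, ← mulVec_mulVec, ← hd₁, dotProduct_mulVec nplus Mᵀ,
      vecMul_transpose, ← hd₁]
    ring
  have hd₂_eq : d₂ = G⁻¹ *ᵥ nplus + Mᵀ *ᵥ d₁ := by
    rw [hd₂, hH, add_mulVec, hd₁, mulVec_mulVec]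
  have hinv := fromBlocks_replicateCol_neg_mul_eq_one hR d₁ hs0
  refine ⟨?_, isUnit_det_of_right_inverse hinv, inv_eq_right_inv hinv, ?_⟩
  · rw [transpose_fromCols_replicateCol_mul_mul hGsym.inv,
      transpose_fromBlocks_replicateCol_mul_self, fromBlocks_neg, hRR, hNGn, hnGn, mulVec_neg,
      neg_dotProduct_neg, hs]
    congr 1
    ext; simp only [Matrix.neg_apply, of_apply]; ring
  · rw [← transpose_nonsing_inv, inv_eq_right_inv hinv, transpose_fromBlocks_replicateCol,
      Matrix.mul_assoc, transpose_fromCols_replicateCol_mul hGsym.inv,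
      fromBlocks_replicateRow_mul_fromRows, hNG, ← Matrix.mul_assoc, transpose_nonsing_inv,
      nonsing_inv_mul _ hRT, Matrix.one_mul]
    rw [smul_vecMul, ← vecMul_vecMul, vecMul_transpose, mulVec_mulVec, mul_nonsing_inv _ hR,
      one_mulVec, ← mulVec_transpose, hd₂_eq, smul_add, add_comm]

/-- Updating the Cholesky-type factorization when a constraint is added: with
`δ = n⁺ᵀH n⁺ < 0`, `d₁ = M n⁺`, `d₂ = H n⁺`, the matrix
`R₊ = [[R, −d₁],[0, √(−δ)]]` satisfies `−N₊ᵀG⁻¹N₊ = R₊ᵀR₊`, is invertible with the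
stated triangular inverse, and `R₊⁻ᵀN₊ᵀG⁻¹` is `M` with the row `d₂ᵀ/√(−δ)` appended. -/
theorem stmt_17 {n q : ℕ} (G : Matrix (Fin n) (Fin n) ℝ)
    (hGsym : G.IsSymm) (hG : IsUnit G.det)
    (N : Matrix (Fin n) (Fin q) ℝ)
    (R : Matrix (Fin q) (Fin q) ℝ) (hR : IsUnit R.det)
    (hRR : -(Nᵀ * G⁻¹ * N) = Rᵀ * R)
    (M : Matrix (Fin q) (Fin n) ℝ) (hM : M = Rᵀ⁻¹ * Nᵀ * G⁻¹)
    (H : Matrix (Fin n) (Fin n) ℝ) (hH : H = G⁻¹ + Mᵀ * M)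
    (nplus : Fin n → ℝ)
    (δ : ℝ) (hδ : δ = nplus ⬝ᵥ H *ᵥ nplus) (hδneg : δ < 0)
    (d₁ : Fin q → ℝ) (hd₁ : d₁ = M *ᵥ nplus)
    (d₂ : Fin n → ℝ) (hd₂ : d₂ = H *ᵥ nplus)
    (Nplus : Matrix (Fin n) (Fin q ⊕ Unit) ℝ)
    (hNplus : Nplus = Matrix.fromCols N (Matrix.replicateCol Unit nplus))
    (Rplus : Matrix (Fin q ⊕ Unit) (Fin q ⊕ Unit) ℝ)
    (hRplus : Rplus = Matrix.fromBlocks R (Matrix.replicateCol Unit (-d₁)) 0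
      (Matrix.of fun _ _ => Real.sqrt (-δ))) :
    -(Nplusᵀ * G⁻¹ * Nplus) = Rplusᵀ * Rplus ∧
    IsUnit Rplus.det ∧
    Rplus⁻¹ = Matrix.fromBlocks R⁻¹
      (Matrix.replicateCol Unit ((Real.sqrt (-δ))⁻¹ • (R⁻¹ *ᵥ d₁))) 0
      (Matrix.of fun _ _ => (Real.sqrt (-δ))⁻¹) ∧
    Rplusᵀ⁻¹ * Nplusᵀ * G⁻¹ =
      Matrix.fromRows M (Matrix.replicateRow Unit ((Real.sqrt (-δ))⁻¹ • d₂)) :=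
  stmt_17_general G hGsym N R hR hRR M hM H hH nplus δ hδ hδneg d₁ hd₁ d₂ hd₂ Nplus hNplus Rplus
    hRplus
end

section
/- Consider the quadratic minimax problem min over x ∈ ℝ^{n_x} max over y ∈ ℝ^{n_y} of f(z) = ½zᵀGz + cᵀz subject to Dz + h ≤ 0, where z = (x,y), G = [[G₁₁, G₁₂],[G₁₂ᵀ, G₂₂]] with G₁₁ symmetric and G₂₂ symmetric negative definite, D = [A B] ∈ ℝ^{m×(n_x+n_y)}, and Y(x) = { y : Ax + By + h ≤ 0 }. Let z* = (x*, y*) with y* ∈ Y(x*), λ* ∈ ℝ^m, and let I = { i : D_i z* + h_i = 0 } be the active set. Suppose: (i) Gz* + c + Dᵀλ* = 0; (ii) λ* ≤ 0, Dz* + h ≤ 0, and λ_i*(D_i z* + h_i) = 0 for all i; (iii) strict complementarity: λ_i* + D_i z* + h_i < 0 for all i = 1,…,m; (iv) the rows { B_i : i ∈ I } are linearly independent; (v) the matrix G₁₁ − [G₁₂ A_Iᵀ]·[[G₂₂, B_Iᵀ],[B_I, 0]]⁻¹·[G₁₂ᵀ; A_I] is positive definite. Then there exist ε₀ > 0, δ₁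 > 0, ε₁ ∈ (0, ε₀), γ₁ > 0, γ₂ > 0 such that for all x with ‖x − x*‖ ≤ δ₁ and all y ∈ Y(x*) with ‖y − y*‖ ≤ ε₁: f(x*, y) + (γ₁/2)‖y − y*‖² ≤ f(x*, y*) ≤ sup{ f(x, ω) : ω ∈ Y(x), ‖ω − y*‖ ≤ ε₀ } − (γ₂/2)‖x − x*‖². In particular, (x*, y*) is a local minimax point of the problem. -/
/-!
Along `x = x*` the objective is strongly concave in `y` (`G₂₂ ≺ 0`), and by stationarity,
complementarity and `λ* ≤ 0` its first-order change towards any `y ∈ Y(x*)` is nonpositive; this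
gives the left inequality, even for all `y ∈ Y(x*)`.

For the right one, answer a step `p` of `x` by the step `u` of `y` that solves the KKT system of
the active constraints, `G₂₂ u + B_Iᵀ ν = -G₁₂ᵀ p`, `B_I u = -A_I p`; the KKT matrix is invertible
by `G₂₂ ≺ 0` and the independence of the rows of `B_I`. Along `(p, u)` the active constraints
stay active and, for small `p`, the inactive ones stay slack; the first-order term vanishes by
complementarity, and the second-order term is `pᵀ Γ p`, where `Γ` is the Schur complement in (v).
-/

open Matrix Filter Topology

noncomputable def eucNorm {k : ℕ} (v : Fin k → ℝ) : ℝ := Real.sqrt (∑ i, v i ^ 2)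

section EucNorm

variable {k : ℕ}

lemma eucNorm_sq (v : Fin k → ℝ) : eucNorm v ^ 2 = v ⬝ᵥ v := by
  rw [eucNorm, Real.sq_sqrt (Finset.sum_nonneg fun i _ => sq_nonneg (v i))]
  simp [dotProduct, sq]

lemma abs_le_eucNorm (v : Fin k → ℝ) (i : Fin k) : |v i| ≤ eucNorm v := by
  rw [← Real.sqrt_sq_eq_abs]
  exact Real.sqrt_le_sqrt
    (Finset.single_le_sum (fun j _ => sq_nonneg (v j)) (Finset.mem_univ i))

lemma norm_le_eucNorm (v : Fin k → ℝ) : ‖v‖ ≤ eucNorm v :=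
  (pi_norm_le_iff_of_nonneg (Real.sqrt_nonneg _)).2 fun i => abs_le_eucNorm v i

@[fun_prop]
lemma continuous_eucNorm : Continuous (eucNorm : (Fin k → ℝ) → ℝ) := by
  unfold eucNorm
  fun_prop

lemma exists_pos_forall_eucNorm_sub_le {P : (Fin k → ℝ) → Prop} {x₀ : Fin k → ℝ}
    (h : ∀ᶠ x in 𝓝 x₀, P x) : ∃ δ > 0, ∀ x, eucNorm (x - x₀) ≤ δ → P x := by
  obtain ⟨ε, hε, hP⟩ := Metric.eventually_nhds_iff.1 h
  refine ⟨ε / 2, half_pos hε, fun x hx => hP ?_⟩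
  rw [dist_eq_norm]
  linarith [norm_le_eucNorm (x - x₀)]

lemma bddAbove_setOf_eucNorm_sub_le {g : (Fin k → ℝ) → ℝ} (hg : Continuous g)
    (P : (Fin k → ℝ) → Prop) (y₀ : Fin k → ℝ) (r : ℝ) :
    BddAbove {v | ∃ ω, P ω ∧ eucNorm (ω - y₀) ≤ r ∧ v = g ω} := by
  refine ((isCompact_closedBall y₀ r).bddAbove_image hg.continuousOn).mono ?_
  rintro _ ⟨ω, -, hω, rfl⟩
  refine ⟨ω, ?_, rfl⟩
  rw [Metric.mem_closedBall, dist_eq_norm]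
  exact (norm_le_eucNorm _).trans hω

end EucNorm

@[fun_prop]
lemma continuous_sumElim_left {ι κ X : Type*} [TopologicalSpace X] (x : ι → X) :
    Continuous (Sum.elim x : (κ → X) → ι ⊕ κ → X) :=
  continuous_pi (Sum.rec (fun _ => continuous_const) continuous_apply)

lemma eventually_forall_le_zero_of_active {X ι : Type*} [TopologicalSpace X] [Finite ι]
    {φ : X → ι → ℝ} {x₀ : X} (hφ : Continuous φ) (hle : ∀ i, φ x₀ i ≤ 0)
    (hactive : ∀ i, φ x₀ i = 0 → ∀ x, φ x i = 0) : ∀ᶠ x in 𝓝 x₀, ∀ i, φ x i ≤ 0 := by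
  refine eventually_all.2 fun i => (hle i).lt_or_eq.elim (fun hlt => ?_) fun heq => ?_
  · exact (((continuous_apply i).comp hφ).tendsto x₀).eventually_lt_const hlt
      |>.mono fun _ => le_of_lt
  · exact Eventually.of_forall fun x => (hactive i heq x).le

namespace Matrix

variable {n l : Type*} [Fintype n] [Fintype l] [DecidableEq n]

open scoped MatrixOrder in
lemma PosDef.exists_pos_mul_dotProduct_self_le {M : Matrix n n ℝ} (hM : M.PosDef) :
    ∃ μ > 0, ∀ v : n → ℝ, μ * (v ⬝ᵥ v) ≤ v ⬝ᵥ M *ᵥ v := by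
  cases isEmpty_or_nonempty n
  · exact ⟨1, one_pos, fun v => by simp [dotProduct]⟩
  have hM' : IsStrictlyPositive M := isStrictlyPositive_iff_posDef.mpr hM
  -- a positive lower bound `μ` of the spectrum gives `μ • 1 ≤ M` in the Loewner order
  obtain ⟨μ, hμ, hle⟩ := (CFC.exists_pos_algebraMap_le_iff hM'.isSelfAdjoint).2
    fun _ hx => hM'.spectrum_pos hx
  refine ⟨μ, hμ, fun v => ?_⟩
  simpa [Algebra.algebraMap_eq_smul_one, sub_mulVec, dotProduct_sub, smul_mulVec,
    dotProduct_smul] using (le_iff.mp hle).dotProduct_mulVec_nonneg v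

lemma isUnit_fromBlocks_transpose_zero [DecidableEq l] {Q : Matrix n n ℝ} {C : Matrix l n ℝ}
    (hQ : (-Q).PosDef) (hC : LinearIndependent ℝ C.row) : IsUnit (fromBlocks Q Cᵀ C 0) := by
  rw [← mulVec_injective_iff_isUnit, ← coe_mulVecLin, ← LinearMap.ker_eq_bot,
    LinearMap.ker_eq_bot']
  intro v hv
  rw [mulVecLin_apply, fromBlocks_mulVec, ← Sum.elim_zero_zero, Sum.elim_eq_iff] at hv
  obtain ⟨hQC, hCa⟩ := hv
  set a := v ∘ Sum.inl
  set b := v ∘ Sum.inr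
  simp only [zero_mulVec, add_zero] at hCa
  have ha : a = 0 := by
    by_contra ha
    have hpos := hQ.dotProduct_mulVec_pos ha
    have hzero : a ⬝ᵥ Q *ᵥ a = 0 := by
      have := congrArg (a ⬝ᵥ ·) hQC
      simpa [dotProduct_add, dotProduct_mulVec a Cᵀ, vecMul_transpose, hCa] using this
    simp [neg_mulVec, hzero] at hpos
  have hb : b = 0 := by
    rw [ha, mulVec_zero, zero_add, mulVec_transpose] at hQC
    exact vecMul_injective_iff.2 hC (hQC.trans (zero_vecMul C).symm)
  rw [← Sum.elim_comp_inl_inr v, ← Sum.elim_zero_zero]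
  exact congrArg₂ Sum.elim ha hb

end Matrix

section KKTResponse

variable {n k l : Type*} [Fintype n] [Fintype k] [Fintype l] [DecidableEq k] [DecidableEq l]
variable (G11 : Matrix n n ℝ) (G12 : Matrix n k ℝ) {G22 : Matrix k k ℝ} (AI : Matrix l n ℝ)
  {BI : Matrix l k ℝ}

variable (G22 BI) in
/-- The step `u` (left component) and multiplier `ν` (right component) of the KKT system of
`max_u ½ (p, u)ᵀ G (p, u)` subject to `AI p + BI u = 0`, where `G = fromBlocks G11 G12 G12ᵀ G22`. -/
noncomputable def kktResponse (p : n → ℝ) : k ⊕ l → ℝ :=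
  -(((fromBlocks G22 BIᵀ BI 0)⁻¹ * fromRows G12ᵀ AI) *ᵥ p)

lemma kktResponse_spec (hK : IsUnit (fromBlocks G22 BIᵀ BI 0)) (p : n → ℝ) :
    G22 *ᵥ (kktResponse G12 G22 AI BI p ∘ Sum.inl) +
          BIᵀ *ᵥ (kktResponse G12 G22 AI BI p ∘ Sum.inr) = -(G12ᵀ *ᵥ p) ∧
      BI *ᵥ (kktResponse G12 G22 AI BI p ∘ Sum.inl) = -(AI *ᵥ p) := by
  have h : fromBlocks G22 BIᵀ BI 0 *ᵥ kktResponse G12 G22 AI BI p =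
      -(fromRows G12ᵀ AI *ᵥ p) := by
    rw [kktResponse, mulVec_neg, mulVec_mulVec,
      mul_nonsing_inv_cancel_left _ _ ((isUnit_iff_isUnit_det _).1 hK)]
  rw [fromBlocks_mulVec, fromRows_mulVec, ← Sum.elim_neg_neg, Sum.elim_eq_iff] at h
  simpa using h

variable (G22 BI) in
lemma schur_mulVec (p : n → ℝ) :
    (G11 - fromCols G12 AIᵀ * (fromBlocks G22 BIᵀ BI 0)⁻¹ * fromRows G12ᵀ AI) *ᵥ p =
      G11 *ᵥ p + fromCols G12 AIᵀ *ᵥ kktResponse G12 G22 AI BI p := by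
  rw [kktResponse, sub_mulVec, Matrix.mul_assoc, ← mulVec_mulVec, mulVec_neg, sub_eq_add_neg]

lemma dotProduct_fromBlocks_mulVec_kktResponse (hK : IsUnit (fromBlocks G22 BIᵀ BI 0))
    (p : n → ℝ) :
    let u := kktResponse G12 G22 AI BI p ∘ Sum.inl
    Sum.elim p u ⬝ᵥ fromBlocks G11 G12 G12ᵀ G22 *ᵥ Sum.elim p u =
      p ⬝ᵥ (G11 - fromCols G12 AIᵀ * (fromBlocks G22 BIᵀ BI 0)⁻¹ * fromRows G12ᵀ AI) *ᵥ p := by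
  intro u
  set ν := kktResponse G12 G22 AI BI p ∘ Sum.inr
  obtain ⟨h₁, h₂⟩ := kktResponse_spec G12 AI hK p
  -- the second block row collapses to `-BIᵀ ν`, and `u ⬝ᵥ BIᵀ ν = -(AI p) ⬝ᵥ ν`
  have hrow : u ⬝ᵥ (G12ᵀ *ᵥ p + G22 *ᵥ u) = p ⬝ᵥ AIᵀ *ᵥ ν := by
    rw [show G12ᵀ *ᵥ p + G22 *ᵥ u = -(BIᵀ *ᵥ ν) by linear_combination h₁,
      dotProduct_neg, dotProduct_mulVec, vecMul_transpose, h₂, dotProduct_mulVec p,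
      vecMul_transpose, neg_dotProduct, neg_neg]
  rw [schur_mulVec, fromCols_mulVec, fromBlocks_mulVec]
  simp only [Sum.elim_comp_inl, Sum.elim_comp_inr, sumElim_dotProduct_sumElim, hrow,
    dotProduct_add]
  ring

end KKTResponse

section QuadraticProgram

variable {n m : Type*} [Fintype n] [Fintype m]

noncomputable def quadObj (G : Matrix n n ℝ) (c z : n → ℝ) : ℝ :=
  (1 / 2) * (z ⬝ᵥ G *ᵥ z) + c ⬝ᵥ z

@[fun_prop]
lemma continuous_quadObj (G : Matrix n n ℝ) (c : n → ℝ) : Continuous (quadObj G c) := by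
  unfold quadObj
  fun_prop

lemma quadObj_add_of_stationary {G : Matrix n n ℝ} (hG : G.IsSymm) {c z : n → ℝ}
    {D : Matrix m n ℝ} {lam : m → ℝ} (hstat : G *ᵥ z + c + Dᵀ *ᵥ lam = 0) (w : n → ℝ) :
    quadObj G c (z + w) = quadObj G c z - (D *ᵥ w) ⬝ᵥ lam + (1 / 2) * (w ⬝ᵥ G *ᵥ w) := by
  have hsymm : z ⬝ᵥ G *ᵥ w = w ⬝ᵥ G *ᵥ z := by
    rw [dotProduct_mulVec, ← mulVec_transpose, hG.eq, dotProduct_comm]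
  have hgrad : w ⬝ᵥ (G *ᵥ z + c) = -((D *ᵥ w) ⬝ᵥ lam) := by
    rw [eq_neg_of_add_eq_zero_left hstat, dotProduct_neg, dotProduct_mulVec, vecMul_transpose]
  simp only [quadObj, mulVec_add, dotProduct_add, add_dotProduct] at hgrad ⊢
  rw [hsymm, dotProduct_comm c w]
  linarith

lemma dotProduct_mulVec_nonneg_of_feasible {D : Matrix m n ℝ} {h lam : m → ℝ} {z w : n → ℝ}
    (hsign : ∀ i, lam i ≤ 0) (hcomp : ∀ i, lam i * (D *ᵥ z + h) i = 0)
    (hw : ∀ i, (D *ᵥ (z + w) + h) i ≤ 0) : 0 ≤ (D *ᵥ w) ⬝ᵥ lam := by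
  refine Finset.sum_nonneg fun i _ => ?_
  have hsplit : (D *ᵥ w) i * lam i =
      lam i * (D *ᵥ (z + w) + h) i - lam i * (D *ᵥ z + h) i := by
    simp only [mulVec_add, Pi.add_apply]
    ring
  rw [hsplit, hcomp, sub_zero]
  exact mul_nonneg_of_nonpos_of_nonpos (hsign i) (hw i)

end QuadraticProgram

section Minimax

variable {nx ny m : ℕ} {G11 : Matrix (Fin nx) (Fin nx) ℝ} {G12 : Matrix (Fin nx) (Fin ny) ℝ}
  {G22 : Matrix (Fin ny) (Fin ny) ℝ} {A : Matrix (Fin m) (Fin nx) ℝ}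
  {B : Matrix (Fin m) (Fin ny) ℝ} {c : Fin nx ⊕ Fin ny → ℝ} {h : Fin m → ℝ}
  {xstar : Fin nx → ℝ} {ystar : Fin ny → ℝ} {lamstar : Fin m → ℝ}

lemma exists_quadObj_sumElim_add_sq_le (hG : (fromBlocks G11 G12 G12ᵀ G22).IsSymm)
    (hG22 : (-G22).PosDef)
    (hstat : fromBlocks G11 G12 G12ᵀ G22 *ᵥ Sum.elim xstar ystar + c +
      (fromCols A B)ᵀ *ᵥ lamstar = 0)
    (hsign : ∀ i, lamstar i ≤ 0)
    (hcomp : ∀ i, lamstar i * (fromCols A B *ᵥ Sum.elim xstar ystar + h) i = 0) :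
    ∃ γ > 0, ∀ y, (∀ i, (A *ᵥ xstar + B *ᵥ y + h) i ≤ 0) →
      quadObj (fromBlocks G11 G12 G12ᵀ G22) c (Sum.elim xstar y) +
          γ / 2 * eucNorm (y - ystar) ^ 2 ≤
        quadObj (fromBlocks G11 G12 G12ᵀ G22) c (Sum.elim xstar ystar) := by
  obtain ⟨γ, hγ, hcoer⟩ := hG22.exists_pos_mul_dotProduct_self_le
  refine ⟨γ, hγ, fun y hy => ?_⟩
  set w := Sum.elim (0 : Fin nx → ℝ) (y - ystar)
  have hz : Sum.elim xstar y = Sum.elim xstar ystar + w := by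
    rw [← Sum.elim_add_add, add_zero, add_sub_cancel]
  have hfeas : ∀ i, (fromCols A B *ᵥ (Sum.elim xstar ystar + w) + h) i ≤ 0 := by
    rwa [← hz, fromCols_mulVec_sumElim]
  have hquad : w ⬝ᵥ fromBlocks G11 G12 G12ᵀ G22 *ᵥ w = (y - ystar) ⬝ᵥ G22 *ᵥ (y - ystar) := by
    simp [w, fromBlocks_mulVec, sumElim_dotProduct_sumElim]
  have hlin := dotProduct_mulVec_nonneg_of_feasible hsign hcomp hfeas
  have hneg := hcoer (y - ystar)
  rw [neg_mulVec, dotProduct_neg] at hneg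
  rw [hz, quadObj_add_of_stationary hG hstat, hquad, eucNorm_sq]
  linarith

variable {I : Finset (Fin m)} {AI : Matrix {i // i ∈ I} (Fin nx) ℝ}
  {BI : Matrix {i // i ∈ I} (Fin ny) ℝ}

lemma fromCols_mulVec_kktResponse_apply_of_mem (hAI : AI = of fun i j => A i.val j)
    (hBIdef : BI = of fun i j => B i.val j) (hK : IsUnit (fromBlocks G22 BIᵀ BI 0))
    (p : Fin nx → ℝ) {i : Fin m} (hi : i ∈ I) :
    (fromCols A B *ᵥ Sum.elim p (kktResponse G12 G22 AI BI p ∘ Sum.inl)) i = 0 := by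
  have hrow := congrFun (kktResponse_spec G12 AI hK p).2 ⟨i, hi⟩
  subst hAI hBIdef
  change (B *ᵥ _) i = -(A *ᵥ p) i at hrow
  rw [fromCols_mulVec_sumElim, Pi.add_apply, hrow, add_neg_cancel]

lemma quadObj_add_kktResponse (hG : (fromBlocks G11 G12 G12ᵀ G22).IsSymm)
    (hstat : fromBlocks G11 G12 G12ᵀ G22 *ᵥ Sum.elim xstar ystar + c +
      (fromCols A B)ᵀ *ᵥ lamstar = 0)
    (hcomp : ∀ i, lamstar i * (fromCols A B *ᵥ Sum.elim xstar ystar + h) i = 0)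
    (hI : ∀ i, i ∈ I ↔ (fromCols A B *ᵥ Sum.elim xstar ystar + h) i = 0)
    (hAI : AI = of fun i j => A i.val j) (hBIdef : BI = of fun i j => B i.val j)
    (hK : IsUnit (fromBlocks G22 BIᵀ BI 0)) (p : Fin nx → ℝ) :
    quadObj (fromBlocks G11 G12 G12ᵀ G22) c
        (Sum.elim xstar ystar + Sum.elim p (kktResponse G12 G22 AI BI p ∘ Sum.inl)) =
      quadObj (fromBlocks G11 G12 G12ᵀ G22) c (Sum.elim xstar ystar) +
        (1 / 2) * (p ⬝ᵥ (G11 - fromCols G12 AIᵀ * (fromBlocks G22 BIᵀ BI 0)⁻¹ *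
          fromRows G12ᵀ AI) *ᵥ p) := by
  have hlin :
      (fromCols A B *ᵥ Sum.elim p (kktResponse G12 G22 AI BI p ∘ Sum.inl)) ⬝ᵥ lamstar = 0 := by
    refine Finset.sum_eq_zero fun i _ => ?_
    by_cases hi : i ∈ I
    · rw [fromCols_mulVec_kktResponse_apply_of_mem hAI hBIdef hK p hi, zero_mul]
    · rw [(mul_eq_zero.1 (hcomp i)).resolve_right (mt (hI i).2 hi), mul_zero]
  rw [quadObj_add_of_stationary hG hstat, hlin, sub_zero,
    dotProduct_fromBlocks_mulVec_kktResponse G11 G12 AI hK]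

lemma exists_feasible_quadObj_sumElim_ge (hG : (fromBlocks G11 G12 G12ᵀ G22).IsSymm)
    (hG22 : (-G22).PosDef)
    (hstat : fromBlocks G11 G12 G12ᵀ G22 *ᵥ Sum.elim xstar ystar + c +
      (fromCols A B)ᵀ *ᵥ lamstar = 0)
    (hprim : ∀ i, (fromCols A B *ᵥ Sum.elim xstar ystar + h) i ≤ 0)
    (hcomp : ∀ i, lamstar i * (fromCols A B *ᵥ Sum.elim xstar ystar + h) i = 0)
    (hI : ∀ i, i ∈ I ↔ (fromCols A B *ᵥ Sum.elim xstar ystar + h) i = 0)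
    (hBI : LinearIndependent ℝ (fun i : {i // i ∈ I} => B i.val))
    (hAI : AI = of fun i j => A i.val j) (hBIdef : BI = of fun i j => B i.val j)
    (hΓ : (G11 - fromCols G12 AIᵀ * (fromBlocks G22 BIᵀ BI 0)⁻¹ * fromRows G12ᵀ AI).PosDef) :
    ∃ δ > 0, ∃ γ > 0, ∀ x, eucNorm (x - xstar) ≤ δ → ∃ ω,
      (∀ i, (A *ᵥ x + B *ᵥ ω + h) i ≤ 0) ∧ eucNorm (ω - ystar) ≤ 1 ∧
      quadObj (fromBlocks G11 G12 G12ᵀ G22) c (Sum.elim xstar ystar) +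
          γ / 2 * eucNorm (x - xstar) ^ 2 ≤
        quadObj (fromBlocks G11 G12 G12ᵀ G22) c (Sum.elim x ω) := by
  have hK : IsUnit (fromBlocks G22 BIᵀ BI 0) :=
    isUnit_fromBlocks_transpose_zero hG22 (by subst hBIdef; exact hBI)
  set u : (Fin nx → ℝ) → Fin ny → ℝ := fun p => kktResponse G12 G22 AI BI p ∘ Sum.inl with hu
  have hu0 : u 0 = 0 := by simp [hu, kktResponse]
  have hucont : Continuous u := by
    simp only [hu, kktResponse]
    fun_prop
  have hsplit : ∀ x, A *ᵥ x + B *ᵥ (ystar + u (x - xstar)) + h =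
      fromCols A B *ᵥ Sum.elim xstar ystar + h +
        fromCols A B *ᵥ Sum.elim (x - xstar) (u (x - xstar)) := by
    intro x
    simp only [fromCols_mulVec_sumElim, mulVec_add, mulVec_sub]
    abel
  have hstar : A *ᵥ xstar + B *ᵥ (ystar + u (xstar - xstar)) + h =
      fromCols A B *ᵥ Sum.elim xstar ystar + h := by
    rw [hsplit, sub_self, hu0, Sum.elim_zero_zero, mulVec_zero, add_zero]
  have hfeas : ∀ᶠ x in 𝓝 xstar, ∀ i, (A *ᵥ x + B *ᵥ (ystar + u (x - xstar)) + h) i ≤ 0 := by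
    refine eventually_forall_le_zero_of_active (by fun_prop) (fun i => hstar ▸ hprim i)
      fun i hi x => ?_
    rw [hstar] at hi
    rw [hsplit, Pi.add_apply, hi,
      fromCols_mulVec_kktResponse_apply_of_mem hAI hBIdef hK _ ((hI i).2 hi), add_zero]
  have hnorm : ∀ᶠ x in 𝓝 xstar, eucNorm (u (x - xstar)) ≤ 1 :=
    ((by fun_prop : Continuous fun x => eucNorm (u (x - xstar))).tendsto xstar).eventually_lt_const
      (by simp [hu0, eucNorm]) |>.mono fun _ => le_of_lt
  obtain ⟨δ, hδ, hnear⟩ := exists_pos_forall_eucNorm_sub_le (hfeas.and hnorm)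
  obtain ⟨γ, hγ, hcoer⟩ := hΓ.exists_pos_mul_dotProduct_self_le
  refine ⟨δ, hδ, γ, hγ, fun x hx => ⟨ystar + u (x - xstar), (hnear x hx).1, ?_, ?_⟩⟩
  · simpa using (hnear x hx).2
  · have hvalue := quadObj_add_kktResponse hG hstat hcomp hI hAI hBIdef hK (x - xstar)
    rw [← Sum.elim_add_add, add_sub_cancel] at hvalue
    rw [hvalue, eucNorm_sq]
    linarith [hcoer (x - xstar)]

end Minimax

theorem stmt_18_general {nx ny m : ℕ}
    (G11 : Matrix (Fin nx) (Fin nx) ℝ) (G12 : Matrix (Fin nx) (Fin ny) ℝ)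
    (G22 : Matrix (Fin ny) (Fin ny) ℝ)
    (hG11 : G11.IsSymm) (hG22 : G22.IsSymm) (hG22nd : (-G22).PosDef)
    (A : Matrix (Fin m) (Fin nx) ℝ) (B : Matrix (Fin m) (Fin ny) ℝ)
    (cx : Fin nx → ℝ) (cy : Fin ny → ℝ) (h : Fin m → ℝ)
    (G : Matrix (Fin nx ⊕ Fin ny) (Fin nx ⊕ Fin ny) ℝ)
    (hG : G = Matrix.fromBlocks G11 G12 G12ᵀ G22)
    (c : Fin nx ⊕ Fin ny → ℝ) (hc : c = Sum.elim cx cy)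
    (D : Matrix (Fin m) (Fin nx ⊕ Fin ny) ℝ) (hD : D = Matrix.fromCols A B)
    (f : (Fin nx → ℝ) → (Fin ny → ℝ) → ℝ)
    (hf : ∀ x y, f x y = (1 / 2) * (Sum.elim x y ⬝ᵥ G *ᵥ Sum.elim x y) + c ⬝ᵥ Sum.elim x y)
    (xstar : Fin nx → ℝ) (ystar : Fin ny → ℝ)
    (zstar : Fin nx ⊕ Fin ny → ℝ) (hzstar : zstar = Sum.elim xstar ystar)
    (lamstar : Fin m → ℝ)
    -- the active index set
    (I : Finset (Fin m)) (hI : ∀ i, i ∈ I ↔ (D *ᵥ zstar + h) i = 0)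
    -- (i) stationarity
    (hstat : G *ᵥ zstar + c + Dᵀ *ᵥ lamstar = 0)
    -- (ii) complementarity with sign conditions
    (hsign : ∀ i, lamstar i ≤ 0)
    (hprim : ∀ i, (D *ᵥ zstar + h) i ≤ 0)
    (hcomp : ∀ i, lamstar i * ((D *ᵥ zstar + h) i) = 0)
    -- (iv) linear independence of the active rows of B
    (hBI : LinearIndependent ℝ (fun i : {i // i ∈ I} => B i.val))
    -- (v) positive definiteness of Γ_I
    (AI : Matrix {i // i ∈ I} (Fin nx) ℝ) (hAI : AI = Matrix.of fun i j => A i.val j)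
    (BI : Matrix {i // i ∈ I} (Fin ny) ℝ) (hBIdef : BI = Matrix.of fun i j => B i.val j)
    (hΓ : (G11 - Matrix.fromCols G12 AIᵀ * (Matrix.fromBlocks G22 BIᵀ BI 0)⁻¹ *
      Matrix.fromRows G12ᵀ AI).PosDef) :
    ∃ ε₀ > (0 : ℝ), ∃ δ₁ > (0 : ℝ), ∃ ε₁ > (0 : ℝ), ε₁ < ε₀ ∧
      ∃ γ₁ > (0 : ℝ), ∃ γ₂ > (0 : ℝ),
        ∀ (x : Fin nx → ℝ) (y : Fin ny → ℝ),
          eucNorm (x - xstar) ≤ δ₁ →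
          (∀ i, (A *ᵥ xstar + B *ᵥ y + h) i ≤ 0) →
          eucNorm (y - ystar) ≤ ε₁ →
          f xstar y + (γ₁ / 2) * eucNorm (y - ystar) ^ 2 ≤ f xstar ystar ∧
          f xstar ystar ≤
            sSup {v : ℝ | ∃ ω : Fin ny → ℝ,
                (∀ i, (A *ᵥ x + B *ᵥ ω + h) i ≤ 0) ∧
                eucNorm (ω - ystar) ≤ ε₀ ∧ v = f x ω} -
              (γ₂ / 2) * eucNorm (x - xstar) ^ 2 := by
  subst hG hc hD hzstar
  obtain rfl : f = fun x y =>
      quadObj (fromBlocks G11 G12 G12ᵀ G22) (Sum.elim cx cy) (Sum.elim x y) :=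
    funext₂ hf
  have hGsymm : (fromBlocks G11 G12 G12ᵀ G22).IsSymm := hG11.fromBlocks rfl hG22
  obtain ⟨γ₁, hγ₁, hmax⟩ := exists_quadObj_sumElim_add_sq_le hGsymm hG22nd hstat hsign hcomp
  obtain ⟨δ₁, hδ₁, γ₂, hγ₂, hmin⟩ :=
    exists_feasible_quadObj_sumElim_ge hGsymm hG22nd hstat hprim hcomp hI hBI hAI hBIdef hΓ
  refine ⟨1, one_pos, δ₁, hδ₁, 1 / 2, by norm_num, by norm_num, γ₁, hγ₁, γ₂, hγ₂,
    fun x y hx hy _ => ⟨hmax y hy, ?_⟩⟩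
  obtain ⟨ω, hωfeas, hωnorm, hω⟩ := hmin x hx
  have hbdd := bddAbove_setOf_eucNorm_sub_le
    (g := fun ω => quadObj (fromBlocks G11 G12 G12ᵀ G22) (Sum.elim cx cy) (Sum.elim x ω))
    (by fun_prop) (fun ω => ∀ i, (A *ᵥ x + B *ᵥ ω + h) i ≤ 0) ystar 1
  linarith [le_csSup hbdd ⟨ω, hωfeas, hωnorm, rfl⟩]

/-- Second-order sufficient optimality conditions for the inequality-constrained
quadratic minimax problem: under KKT, strict complementarity, linear independence of
the active rows of `B`, and positive definiteness of the Schur-type matrix `Γ`, the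
point `(x*, y*)` is a (quantitative) local minimax point. -/
theorem stmt_18 {nx ny m : ℕ}
    (G11 : Matrix (Fin nx) (Fin nx) ℝ) (G12 : Matrix (Fin nx) (Fin ny) ℝ)
    (G22 : Matrix (Fin ny) (Fin ny) ℝ)
    (hG11 : G11.IsSymm) (hG22 : G22.IsSymm) (hG22nd : (-G22).PosDef)
    (A : Matrix (Fin m) (Fin nx) ℝ) (B : Matrix (Fin m) (Fin ny) ℝ)
    (cx : Fin nx → ℝ) (cy : Fin ny → ℝ) (h : Fin m → ℝ)
    (G : Matrix (Fin nx ⊕ Fin ny) (Fin nx ⊕ Fin ny) ℝ)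
    (hG : G = Matrix.fromBlocks G11 G12 G12ᵀ G22)
    (c : Fin nx ⊕ Fin ny → ℝ) (hc : c = Sum.elim cx cy)
    (D : Matrix (Fin m) (Fin nx ⊕ Fin ny) ℝ) (hD : D = Matrix.fromCols A B)
    (f : (Fin nx → ℝ) → (Fin ny → ℝ) → ℝ)
    (hf : ∀ x y, f x y = (1 / 2) * (Sum.elim x y ⬝ᵥ G *ᵥ Sum.elim x y) + c ⬝ᵥ Sum.elim x y)
    (xstar : Fin nx → ℝ) (ystar : Fin ny → ℝ)
    (zstar : Fin nx ⊕ Fin ny → ℝ) (hzstar : zstar = Sum.elim xstar ystar)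
    (hfeas : ∀ i, (A *ᵥ xstar + B *ᵥ ystar + h) i ≤ 0)
    (lamstar : Fin m → ℝ)
    -- the active index set
    (I : Finset (Fin m)) (hI : ∀ i, i ∈ I ↔ (D *ᵥ zstar + h) i = 0)
    -- (i) stationarity
    (hstat : G *ᵥ zstar + c + Dᵀ *ᵥ lamstar = 0)
    -- (ii) complementarity with sign conditions
    (hsign : ∀ i, lamstar i ≤ 0)
    (hprim : ∀ i, (D *ᵥ zstar + h) i ≤ 0)
    (hcomp : ∀ i, lamstar i * ((D *ᵥ zstar + h) i) = 0)
    -- (iii) strict complementarity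
    (hstrict : ∀ i, lamstar i + (D *ᵥ zstar + h) i < 0)
    -- (iv) linear independence of the active rows of B
    (hBI : LinearIndependent ℝ (fun i : {i // i ∈ I} => B i.val))
    -- (v) positive definiteness of Γ_I
    (AI : Matrix {i // i ∈ I} (Fin nx) ℝ) (hAI : AI = Matrix.of fun i j => A i.val j)
    (BI : Matrix {i // i ∈ I} (Fin ny) ℝ) (hBIdef : BI = Matrix.of fun i j => B i.val j)
    (hΓ : (G11 - Matrix.fromCols G12 AIᵀ * (Matrix.fromBlocks G22 BIᵀ BI 0)⁻¹ *
      Matrix.fromRows G12ᵀ AI).PosDef) :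
    ∃ ε₀ > (0 : ℝ), ∃ δ₁ > (0 : ℝ), ∃ ε₁ > (0 : ℝ), ε₁ < ε₀ ∧
      ∃ γ₁ > (0 : ℝ), ∃ γ₂ > (0 : ℝ),
        ∀ (x : Fin nx → ℝ) (y : Fin ny → ℝ),
          eucNorm (x - xstar) ≤ δ₁ →
          (∀ i, (A *ᵥ xstar + B *ᵥ y + h) i ≤ 0) →
          eucNorm (y - ystar) ≤ ε₁ →
          f xstar y + (γ₁ / 2) * eucNorm (y - ystar) ^ 2 ≤ f xstar ystar ∧
          f xstar ystar ≤
            sSup {v : ℝ | ∃ ω : Fin ny → ℝ,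
                (∀ i, (A *ᵥ x + B *ᵥ ω + h) i ≤ 0) ∧
                eucNorm (ω - ystar) ≤ ε₀ ∧ v = f x ω} -
              (γ₂ / 2) * eucNorm (x - xstar) ^ 2 :=
  stmt_18_general G11 G12 G22 hG11 hG22 hG22nd A B cx cy h G hG c hc D hD f hf xstar ystar zstar
    hzstar lamstar I hI hstat hsign hprim hcomp hBI AI hAI BI hBIdef hΓ
end
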